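/- arXiv:2305.18605 — 5 statements merged into one kernel-verified Lean document; each statement's English description precedes it below -/
import Mathlib

section
/- Under the stated definitions, assume the 3n×3n block matrix [[W, M],[Mᵀ, S₁]] is positive semidefinite. Then for every k ≥ 0, V_{k+1} − V_k ≤ z̄_kᵀ Λ z̄_k, where z̄_k = (z_k, w_k, z_{k−h}) ∈ ℝ^{3n}. -/
open Matrix

private lemma sum_Icc_bot_aux {α : Type*} [AddCommMonoid α] (f : ℤ → α) {a b : ℤ} (hab : a ≤ b) :
    ∑ l ∈ Finset.Icc a b, f l = f a + ∑ l ∈ Finset.Icc (a+1) b, f l := by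
  have h : Finset.Icc a b = insert a (Finset.Icc (a+1) b) := by
    ext x; simp only [Finset.mem_Icc, Finset.mem_insert]; omega
  rw [h, Finset.sum_insert (by simp only [Finset.mem_Icc]; omega)]

private lemma sum_Icc_top_aux {α : Type*} [AddCommMonoid α] (f : ℤ → α) {a b : ℤ} (hab : a ≤ b) :
    ∑ l ∈ Finset.Icc a b, f l = (∑ l ∈ Finset.Icc a (b-1), f l) + f b := by
  have h : Finset.Icc a b = insert b (Finset.Icc a (b-1)) := by
    ext x; simp only [Finset.mem_Icc, Finset.mem_insert]; omega
  rw [h, Finset.sum_insert (by simp only [Finset.mem_Icc]; omega), add_comm]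

private lemma tele_aux {α : Type*} [AddCommGroup α] (z : ℤ → α) (a : ℤ) :
    ∀ b : ℤ, a ≤ b → ∑ l ∈ Finset.Icc a (b-1), (z (l+1) - z l) = z b - z a := by
  refine Int.le_induction ?_ ?_
  · rw [Finset.Icc_eq_empty (by omega)]; simp
  · intro b hb ih
    rw [show (b + 1 - 1 : ℤ) = b by ring, sum_Icc_top_aux _ hb, ih]
    abel

private lemma dot_sum_aux {n : ℕ} (u : Fin n → ℝ) (s : Finset ℤ) (v : ℤ → Fin n → ℝ) :
    u ⬝ᵥ (∑ l ∈ s, v l) = ∑ l ∈ s, u ⬝ᵥ v l := by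
  simp only [dotProduct, Finset.sum_apply, Finset.mul_sum]
  exact Finset.sum_comm

private lemma dot_trans {m p : Type*} [Fintype m] [Fintype p] (A : Matrix m p ℝ)
    (x : p → ℝ) (y : m → ℝ) : x ⬝ᵥ (Aᵀ *ᵥ y) = y ⬝ᵥ (A *ᵥ x) := by
  rw [mulVec_transpose, dotProduct_mulVec, dotProduct_comm]

/-- If the block matrix [[W, M],[Mᵀ, S₁]] is positive semidefinite, then along any
mode-1 trajectory the Lyapunov–Krasovskii difference satisfies
V_{k+1} - V_k ≤ z̄_kᵀ Λ z̄_k, where z̄_k = (z_k, w_k, z_{k-h}). -/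
theorem LK_difference_bounded (n h : ℕ) (hn : 1 ≤ n) (hh : 1 ≤ h)
    (P1 S1 S2 : Matrix (Fin n) (Fin n) ℝ)
    (hP1 : P1.PosDef) (hS1 : S1.PosDef) (hS2 : S2.PosDef)
    (A1 Ap Atp : Matrix (Fin n) (Fin n) ℝ) (hAtp : Atp = -Ap)
    (P2 P3 W1 W2 W3 M1 M2 : Matrix (Fin n) (Fin n) ℝ)
    (P W G Ψ : Matrix (Fin n ⊕ Fin n) (Fin n ⊕ Fin n) ℝ)
    (M : Matrix (Fin n ⊕ Fin n) (Fin n) ℝ)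
    (hP : P = Matrix.fromBlocks P1 0 P2 P3)
    (hW : W = Matrix.fromBlocks W1 W2 W2ᵀ W3)
    (hM : M = Matrix.fromRows M1 M2)
    (hG : G = Matrix.fromBlocks 0 1 (A1 - Atp - 1) (-1))
    (hΨ : Ψ = (h : ℝ) • W + Matrix.fromBlocks S2 0 0 (P1 + (h : ℝ) • S1)
        + Matrix.fromBlocks M1 0 M2 0 + (Matrix.fromBlocks M1 0 M2 0)ᵀ
        + Pᵀ * G + Gᵀ * P)
    (Λ : Matrix ((Fin n ⊕ Fin n) ⊕ Fin n) ((Fin n ⊕ Fin n) ⊕ Fin n) ℝ)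
    (hΛ : Λ = Matrix.fromBlocks Ψ (Pᵀ * Matrix.fromRows 0 Atp - M)
        (Pᵀ * Matrix.fromRows 0 Atp - M)ᵀ (-S2))
    (z w : ℤ → Fin n → ℝ) (hw : ∀ k : ℤ, w k = z (k + 1) - z k)
    (hz : ∀ k : ℤ, 0 ≤ k → z (k + 1) = A1 *ᵥ z k + Ap *ᵥ (z k - z (k - (h : ℤ))))
    (V : ℤ → ℝ)
    (hV : ∀ k : ℤ, V k = z k ⬝ᵥ (P1 *ᵥ z k)
        + ∑ θ ∈ Finset.Icc (-(h : ℤ) + 1) 0,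
            ∑ l ∈ Finset.Icc (k - 1 + θ) (k - 1), w l ⬝ᵥ (S1 *ᵥ w l)
        + ∑ l ∈ Finset.Icc (k - (h : ℤ)) (k - 1), z l ⬝ᵥ (S2 *ᵥ z l))
    (hLMI : (Matrix.fromBlocks W M Mᵀ S1).PosSemidef) :
    ∀ k : ℤ, 0 ≤ k →
      V (k + 1) - V k ≤
        (Sum.elim (Sum.elim (z k) (w k)) (z (k - (h : ℤ)))) ⬝ᵥ
          (Λ *ᵥ Sum.elim (Sum.elim (z k) (w k)) (z (k - (h : ℤ)))) := by
  intro k hk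
  have hP1t : P1ᵀ = P1 := by
    rw [← Matrix.conjTranspose_eq_transpose_of_trivial]; exact hP1.1
  set a : Fin n → ℝ := z k with ha
  set b : Fin n → ℝ := w k with hb
  set c : Fin n → ℝ := z (k - (h : ℤ)) with hc
  set ζ : Fin n ⊕ Fin n → ℝ := Sum.elim a b with hζ
  set f : ℤ → ℝ := fun l => w l ⬝ᵥ (S1 *ᵥ w l) with hf
  have hzk1 : z (k + 1) = a + b := by rw [hb, hw k]; abel
  have htraj : a + b = A1 *ᵥ a + Ap *ᵥ (a - c) := by rw [← hzk1]; exact hz k hk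
  -- card of the interval
  have hcard : (Finset.Icc (k - (h : ℤ)) (k - 1)).card = h := by
    rw [Int.card_Icc]; omega
  -- Step 1: the difference of V
  have hterm2 : ∑ θ ∈ Finset.Icc (-(h : ℤ) + 1) 0, ∑ l ∈ Finset.Icc (k + θ) k, f l
      - ∑ θ ∈ Finset.Icc (-(h : ℤ) + 1) 0, ∑ l ∈ Finset.Icc (k - 1 + θ) (k - 1), f l
      = (h : ℝ) * f k - ∑ l ∈ Finset.Icc (k - (h : ℤ)) (k - 1), f l := by
    rw [← Finset.sum_sub_distrib]
    have inner : ∀ θ ∈ Finset.Icc (-(h : ℤ) + 1) 0,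
        (∑ l ∈ Finset.Icc (k + θ) k, f l) - ∑ l ∈ Finset.Icc (k - 1 + θ) (k - 1), f l
        = f k - f (k - 1 + θ) := by
      intro θ hθ
      simp only [Finset.mem_Icc] at hθ
      rw [sum_Icc_top_aux f (by omega : k + θ ≤ k),
        sum_Icc_bot_aux f (by omega : k - 1 + θ ≤ k - 1),
        show k - 1 + θ + 1 = k + θ by ring]
      ring
    rw [Finset.sum_congr rfl inner, Finset.sum_sub_distrib, Finset.sum_const,
      Int.card_Icc, show (0 + 1 - (-(h : ℤ) + 1)) = (h : ℤ) by ring, Int.toNat_natCast,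
      nsmul_eq_mul]
    congr 1
    have hmap : Finset.Icc (k - (h : ℤ)) (k - 1)
        = Finset.map (addLeftEmbedding (k - 1)) (Finset.Icc (-(h : ℤ) + 1) 0) := by
      rw [Finset.map_add_left_Icc]; congr 1 <;> ring
    rw [hmap, Finset.sum_map]
    simp only [addLeftEmbedding_apply]
  have hterm3 : ∑ l ∈ Finset.Icc ((k - (h : ℤ)) + 1) k, z l ⬝ᵥ (S2 *ᵥ z l)
      - ∑ l ∈ Finset.Icc (k - (h : ℤ)) (k - 1), z l ⬝ᵥ (S2 *ᵥ z l)
      = a ⬝ᵥ (S2 *ᵥ a) - c ⬝ᵥ (S2 *ᵥ c) := by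
    rw [sum_Icc_top_aux (fun l => z l ⬝ᵥ (S2 *ᵥ z l)) (by omega : (k - (h : ℤ)) + 1 ≤ k),
      sum_Icc_bot_aux (fun l => z l ⬝ᵥ (S2 *ᵥ z l)) (by omega : k - (h : ℤ) ≤ k - 1)]
    rw [ha, hc]
    ring
  have hDV : V (k + 1) - V k
      = ((a + b) ⬝ᵥ (P1 *ᵥ (a + b)) - a ⬝ᵥ (P1 *ᵥ a))
        + ((h : ℝ) * (b ⬝ᵥ (S1 *ᵥ b)) - ∑ l ∈ Finset.Icc (k - (h : ℤ)) (k - 1), f l)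
        + (a ⬝ᵥ (S2 *ᵥ a) - c ⬝ᵥ (S2 *ᵥ c)) := by
    rw [hV (k + 1), hV k, hzk1]
    simp only [show (k : ℤ) + 1 - 1 = k from by ring,
      show (k : ℤ) + 1 - (h : ℤ) = (k - (h : ℤ)) + 1 from by ring]
    have hfk : f k = b ⬝ᵥ (S1 *ᵥ b) := by rw [hf]
    rw [← ha]
    linarith [hterm2, hterm3]
  -- PSD quadratic bound
  have hq : ∀ l : ℤ, 0 ≤ ζ ⬝ᵥ (W *ᵥ ζ) + 2 * (ζ ⬝ᵥ (M *ᵥ w l)) + w l ⬝ᵥ (S1 *ᵥ w l) := by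
    intro l
    have h0 := hLMI.dotProduct_mulVec_nonneg (Sum.elim ζ (w l))
    rw [star_trivial] at h0
    simp only [fromBlocks_mulVec, sumElim_dotProduct_sumElim, dotProduct_add,
      Sum.elim_comp_inl, Sum.elim_comp_inr] at h0
    rw [dot_trans M (w l) ζ] at h0
    linarith
  -- telescoping
  have htel : ∑ l ∈ Finset.Icc (k - (h : ℤ)) (k - 1), w l = a - c := by
    have h1 : ∀ l ∈ Finset.Icc (k - (h : ℤ)) (k - 1), w l = z (l + 1) - z l :=
      fun l _ => hw l
    rw [Finset.sum_congr rfl h1, tele_aux z (k - (h : ℤ)) k (by omega), ha, hc]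
  have hMsum : ∑ l ∈ Finset.Icc (k - (h : ℤ)) (k - 1), ζ ⬝ᵥ (M *ᵥ w l)
      = ζ ⬝ᵥ (M *ᵥ (a - c)) := by
    simp only [dotProduct_mulVec]
    rw [← dot_sum_aux, htel]
  have hqsum : ∑ l ∈ Finset.Icc (k - (h : ℤ)) (k - 1),
        (ζ ⬝ᵥ (W *ᵥ ζ) + 2 * (ζ ⬝ᵥ (M *ᵥ w l)) + w l ⬝ᵥ (S1 *ᵥ w l))
      = (h : ℝ) * (ζ ⬝ᵥ (W *ᵥ ζ)) + 2 * (ζ ⬝ᵥ (M *ᵥ (a - c)))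
        + ∑ l ∈ Finset.Icc (k - (h : ℤ)) (k - 1), f l := by
    rw [Finset.sum_add_distrib, Finset.sum_add_distrib, Finset.sum_const, hcard,
      nsmul_eq_mul, ← Finset.mul_sum, hMsum]
  -- the trajectory identity
  have hGR : G *ᵥ ζ + (Matrix.fromRows 0 Atp) *ᵥ c = Sum.elim b 0 := by
    rw [hG, hAtp, hζ, fromBlocks_mulVec, fromRows_mulVec]
    funext i
    cases i with
    | inl i => simp
    | inr i =>
      have ht := congrFun htraj i
      simp only [mulVec_sub, Pi.add_apply, Pi.sub_apply] at ht
      simp only [Pi.add_apply, Sum.elim_inr, sub_mulVec, neg_mulVec, one_mulVec,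
        neg_neg, Pi.sub_apply, Pi.neg_apply, zero_mulVec, Pi.zero_apply,
        Sum.elim_comp_inl, Sum.elim_comp_inr]
      linarith
  -- expansion of the quadratic form of Ψ
  have e5 : ζ ⬝ᵥ ((Pᵀ * G) *ᵥ ζ) = (P *ᵥ ζ) ⬝ᵥ (G *ᵥ ζ) := by
    rw [← mulVec_mulVec, dot_trans, dotProduct_comm]
  have e6 : ζ ⬝ᵥ ((Gᵀ * P) *ᵥ ζ) = (P *ᵥ ζ) ⬝ᵥ (G *ᵥ ζ) := by
    rw [← mulVec_mulVec, dot_trans]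
  have e3 : ζ ⬝ᵥ ((Matrix.fromBlocks M1 0 M2 0) *ᵥ ζ) = ζ ⬝ᵥ (M *ᵥ a) := by
    rw [hM, hζ]
    simp [fromBlocks_mulVec, fromRows_mulVec, sumElim_dotProduct_sumElim,
      Sum.elim_comp_inl, Sum.elim_comp_inr]
  have e4 : ζ ⬝ᵥ ((Matrix.fromBlocks M1 0 M2 0)ᵀ *ᵥ ζ) = ζ ⬝ᵥ (M *ᵥ a) := by
    rw [dot_trans]; exact e3
  have hΨexp : ζ ⬝ᵥ (Ψ *ᵥ ζ) = (h : ℝ) * (ζ ⬝ᵥ (W *ᵥ ζ))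
      + (a ⬝ᵥ (S2 *ᵥ a) + b ⬝ᵥ (P1 *ᵥ b) + (h : ℝ) * (b ⬝ᵥ (S1 *ᵥ b)))
      + 2 * (ζ ⬝ᵥ (M *ᵥ a)) + 2 * ((P *ᵥ ζ) ⬝ᵥ (G *ᵥ ζ)) := by
    rw [hΨ]
    simp only [add_mulVec, dotProduct_add]
    rw [e3, e4, e5, e6]
    have e1 : ζ ⬝ᵥ (((h : ℝ) • W) *ᵥ ζ) = (h : ℝ) * (ζ ⬝ᵥ (W *ᵥ ζ)) := by
      rw [smul_mulVec, dotProduct_smul, smul_eq_mul]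
    have e2 : ζ ⬝ᵥ ((Matrix.fromBlocks S2 0 0 (P1 + (h : ℝ) • S1)) *ᵥ ζ)
        = a ⬝ᵥ (S2 *ᵥ a) + (b ⬝ᵥ (P1 *ᵥ b) + (h : ℝ) * (b ⬝ᵥ (S1 *ᵥ b))) := by
      rw [hζ, fromBlocks_mulVec]
      simp [sumElim_dotProduct_sumElim, add_mulVec, smul_mulVec,
        dotProduct_add, dotProduct_smul, Sum.elim_comp_inl, Sum.elim_comp_inr]
    rw [e1, e2]
    ring
  -- expansion of the big quadratic form
  have hBt : c ⬝ᵥ ((Pᵀ * Matrix.fromRows 0 Atp - M)ᵀ *ᵥ ζ)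
      = ζ ⬝ᵥ ((Pᵀ * Matrix.fromRows 0 Atp - M) *ᵥ c) :=
    dot_trans _ c ζ
  have hB : ζ ⬝ᵥ ((Pᵀ * Matrix.fromRows 0 Atp - M) *ᵥ c)
      = (P *ᵥ ζ) ⬝ᵥ ((Matrix.fromRows 0 Atp) *ᵥ c) - ζ ⬝ᵥ (M *ᵥ c) := by
    rw [sub_mulVec, dotProduct_sub]
    erw [← mulVec_mulVec c Pᵀ (Matrix.fromRows 0 Atp)]
    rw [dot_trans, dotProduct_comm]
  have hcross : (P *ᵥ ζ) ⬝ᵥ (G *ᵥ ζ) + (P *ᵥ ζ) ⬝ᵥ ((Matrix.fromRows 0 Atp) *ᵥ c)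
      = (P1 *ᵥ a) ⬝ᵥ b := by
    rw [← dotProduct_add, hGR, hP, hζ, fromBlocks_mulVec, sumElim_dotProduct_sumElim]
    simp [Sum.elim_comp_inl, Sum.elim_comp_inr]
  have hΛexp : (Sum.elim ζ c) ⬝ᵥ (Λ *ᵥ (Sum.elim ζ c))
      = ζ ⬝ᵥ (Ψ *ᵥ ζ) + 2 * (ζ ⬝ᵥ ((Pᵀ * Matrix.fromRows 0 Atp - M) *ᵥ c))
        - c ⬝ᵥ (S2 *ᵥ c) := by
    rw [hΛ, fromBlocks_mulVec, sumElim_dotProduct_sumElim]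
    simp only [Sum.elim_comp_inl, Sum.elim_comp_inr, dotProduct_add,
      neg_mulVec, dotProduct_neg]
    rw [hBt]
    ring
  -- quadratic identity for P1
  have hquad : (a + b) ⬝ᵥ (P1 *ᵥ (a + b))
      = a ⬝ᵥ (P1 *ᵥ a) + b ⬝ᵥ (P1 *ᵥ b) + 2 * ((P1 *ᵥ a) ⬝ᵥ b) := by
    have h1 : a ⬝ᵥ (P1 *ᵥ b) = b ⬝ᵥ (P1 *ᵥ a) := by
      conv_lhs => rw [← hP1t]
      rw [dot_trans]
    have h2 : b ⬝ᵥ (P1 *ᵥ a) = (P1 *ᵥ a) ⬝ᵥ b := dotProduct_comm _ _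
    simp only [mulVec_add, dotProduct_add, add_dotProduct]
    linarith
  -- conclusion
  have hsum_nonneg : 0 ≤ ∑ l ∈ Finset.Icc (k - (h : ℤ)) (k - 1),
      (ζ ⬝ᵥ (W *ᵥ ζ) + 2 * (ζ ⬝ᵥ (M *ᵥ w l)) + w l ⬝ᵥ (S1 *ᵥ w l)) :=
    Finset.sum_nonneg fun l _ => hq l
  have hMdiff : ζ ⬝ᵥ (M *ᵥ (a - c)) = ζ ⬝ᵥ (M *ᵥ a) - ζ ⬝ᵥ (M *ᵥ c) := by
    rw [mulVec_sub, dotProduct_sub]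
  rw [hζ] at hΛexp
  rw [hΛexp]
  rw [hqsum, hMdiff] at hsum_nonneg
  linarith [hDV, hΨexp, hB, hcross, hquad]
end

section
/- Under the stated definitions, assume the 3n×3n block matrix [[W, M],[Mᵀ, S₁]] is positive semidefinite and Λ is negative definite. Then every mode-1 trajectory converges to zero: z_k → 0 as k → ∞. -/
open Matrix

section helpers
variable {Mo : Type*} [AddCommMonoid Mo]

lemma Icc_top' (a b : ℤ) (h : a ≤ b + 1) (f : ℤ → Mo) :
    ∑ l ∈ Finset.Icc a (b+1), f l = f (b+1) + ∑ l ∈ Finset.Icc a b, f l := by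
  have : Finset.Icc a (b+1) = insert (b+1) (Finset.Icc a b) := by
    ext x; simp only [Finset.mem_Icc, Finset.mem_insert]; omega
  rw [this, Finset.sum_insert (by simp only [Finset.mem_Icc]; omega)]

lemma Icc_bot' (a b : ℤ) (h : a ≤ b) (f : ℤ → Mo) :
    ∑ l ∈ Finset.Icc a b, f l = f a + ∑ l ∈ Finset.Icc (a+1) b, f l := by
  have : Finset.Icc a b = insert a (Finset.Icc (a+1) b) := by
    ext x; simp only [Finset.mem_Icc, Finset.mem_insert]; omega
  rw [this, Finset.sum_insert (by simp only [Finset.mem_Icc]; omega)]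

lemma Icc_shift' (p q c : ℤ) (f : ℤ → Mo) :
    ∑ θ ∈ Finset.Icc p q, f (c + θ) = ∑ l ∈ Finset.Icc (c+p) (c+q), f l := by
  rw [← Finset.map_add_left_Icc, Finset.sum_map]
  rfl

end helpers

lemma tel' {Mo : Type*} [AddCommGroup Mo] (f : ℤ → Mo) (a : ℤ) (m : ℕ) :
    ∑ l ∈ Finset.Icc a (a + m - 1), (f (l+1) - f l) = f (a + m) - f a := by
  induction m with
  | zero => simp
  | succ m ih =>
    have h1 : a + (↑(m+1) : ℤ) - 1 = (a + m - 1) + 1 := by push_cast; ring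
    rw [h1, Icc_top' _ _ (by omega), ih]
    have h2 : a + (m:ℤ) - 1 + 1 = a + m := by ring
    rw [h2]
    have h3 : a + (↑(m+1):ℤ) = a + m + 1 := by push_cast; ring
    rw [h3]
    abel

lemma dp_t {m p : Type*} [Fintype m] [Fintype p] (A : Matrix m p ℝ) (u : m → ℝ) (v : p → ℝ) :
    u ⬝ᵥ (A *ᵥ v) = v ⬝ᵥ (Aᵀ *ᵥ u) := by
  simp only [dotProduct, Matrix.mulVec, Matrix.transpose_apply, Finset.mul_sum]
  rw [Finset.sum_comm]
  apply Finset.sum_congr rfl; intro j _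
  apply Finset.sum_congr rfl; intro i _
  ring

lemma dp_tt {m p : Type*} [Fintype m] [Fintype p] (A : Matrix p m ℝ) (u : m → ℝ) (v : p → ℝ) :
    u ⬝ᵥ (Aᵀ *ᵥ v) = v ⬝ᵥ (A *ᵥ u) := by
  rw [dp_t, Matrix.transpose_transpose]

lemma dp_sum {m : Type*} [Fintype m] (s : Finset ℤ) (u : m → ℝ) (f : ℤ → m → ℝ) :
    u ⬝ᵥ (∑ l ∈ s, f l) = ∑ l ∈ s, u ⬝ᵥ f l := by
  simp [dotProduct, Finset.mul_sum]
  rw [Finset.sum_comm]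

lemma mulVec_sum' {m p : Type*} [Fintype m] [Fintype p] (A : Matrix m p ℝ) (s : Finset ℤ)
    (f : ℤ → p → ℝ) : A *ᵥ (∑ l ∈ s, f l) = ∑ l ∈ s, A *ᵥ f l := by
  ext i
  simp [Matrix.mulVec, dotProduct, Finset.mul_sum]
  rw [Finset.sum_comm]

lemma posdef_coercive {m : Type*} [Fintype m] [Nonempty m] [DecidableEq m]
    (Q : Matrix m m ℝ) (hQ : Q.PosDef) :
    ∃ ε > 0, ∀ x : m → ℝ, ε * ‖x‖^2 ≤ x ⬝ᵥ Q *ᵥ x := by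
  have hcont : Continuous fun x : m → ℝ => x ⬝ᵥ Q *ᵥ x := by
    unfold dotProduct Matrix.mulVec
    refine continuous_finset_sum _ (fun i _ => ?_)
    exact (continuous_apply i).mul (continuous_finset_sum _ (fun j _ =>
      continuous_const.mul (continuous_apply j)))
  have hsph : IsCompact (Metric.sphere (0 : m → ℝ) 1) := isCompact_sphere _ _
  obtain ⟨i⟩ := ‹Nonempty m›
  have hne : (Metric.sphere (0 : m → ℝ) 1).Nonempty := by
    refine ⟨Pi.single i 1, ?_⟩
    simp [Pi.norm_single]
  obtain ⟨x0, hx0S, hx0min⟩ := hsph.exists_isMinOn hne hcont.continuousOn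
  have hx0 : ‖x0‖ = 1 := by simpa using hx0S
  have hx0ne : x0 ≠ 0 := by intro h; rw [h] at hx0; simp at hx0
  refine ⟨x0 ⬝ᵥ Q *ᵥ x0, (by simpa using hQ.dotProduct_mulVec_pos hx0ne), fun x => ?_⟩
  rcases eq_or_ne x 0 with rfl | hx
  · simp
  · have hnx : (0:ℝ) < ‖x‖ := norm_pos_iff.mpr hx
    set u := ‖x‖⁻¹ • x with hu
    have hus : u ∈ Metric.sphere (0 : m → ℝ) 1 := by
      simp [hu, norm_smul, abs_of_pos (inv_pos.mpr hnx), inv_mul_cancel₀ hnx.ne']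
    have hq : u ⬝ᵥ Q *ᵥ u = ‖x‖⁻¹ * (‖x‖⁻¹ * (x ⬝ᵥ Q *ᵥ x)) := by
      rw [hu, Matrix.mulVec_smul, smul_dotProduct, dotProduct_smul]
      simp [smul_eq_mul]
    have h2 : x0 ⬝ᵥ Q *ᵥ x0 ≤ u ⬝ᵥ Q *ᵥ u := hx0min hus
    rw [hq] at h2
    have h3 : ‖x‖^2 * (x0 ⬝ᵥ Q *ᵥ x0) ≤ ‖x‖^2 * (‖x‖⁻¹ * (‖x‖⁻¹ * (x ⬝ᵥ Q *ᵥ x))) :=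
      mul_le_mul_of_nonneg_left h2 (sq_nonneg _)
    calc (x0 ⬝ᵥ Q *ᵥ x0) * ‖x‖^2 = ‖x‖^2 * (x0 ⬝ᵥ Q *ᵥ x0) := by ring
      _ ≤ ‖x‖^2 * (‖x‖⁻¹ * (‖x‖⁻¹ * (x ⬝ᵥ Q *ᵥ x))) := h3
      _ = x ⬝ᵥ Q *ᵥ x := by field_simp

lemma cstar_mulVec {n : ℕ} (A : Matrix (Fin n ⊕ Fin n) (Fin n ⊕ Fin n) ℝ)
    (C : Matrix (Fin n) (Fin n) ℝ) (v : Fin n → ℝ) :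
    (A * Matrix.fromRows 0 C) *ᵥ v = A *ᵥ (Matrix.fromRows 0 C *ᵥ v) :=
  (Matrix.mulVec_mulVec v A (Matrix.fromRows 0 C)).symm

lemma claimA (n h : ℕ)
    (P1 S1 S2 A1 Ap Atp : Matrix (Fin n) (Fin n) ℝ) (hAtp : Atp = -Ap)
    (hP1sym : P1ᵀ = P1)
    (P2 P3 W1 W2 W3 M1 M2 : Matrix (Fin n) (Fin n) ℝ)
    (P W G Ψ : Matrix (Fin n ⊕ Fin n) (Fin n ⊕ Fin n) ℝ)
    (M : Matrix (Fin n ⊕ Fin n) (Fin n) ℝ)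
    (hP : P = Matrix.fromBlocks P1 0 P2 P3)
    (hW : W = Matrix.fromBlocks W1 W2 W2ᵀ W3)
    (hM : M = Matrix.fromRows M1 M2)
    (hG : G = Matrix.fromBlocks 0 1 (A1 - Atp - 1) (-1))
    (hΨ : Ψ = (h : ℝ) • W + Matrix.fromBlocks S2 0 0 (P1 + (h : ℝ) • S1)
        + Matrix.fromBlocks M1 0 M2 0 + (Matrix.fromBlocks M1 0 M2 0)ᵀ
        + Pᵀ * G + Gᵀ * P)
    (Λ : Matrix ((Fin n ⊕ Fin n) ⊕ Fin n) ((Fin n ⊕ Fin n) ⊕ Fin n) ℝ)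
    (hΛ : Λ = Matrix.fromBlocks Ψ (Pᵀ * Matrix.fromRows 0 Atp - M)
        (Pᵀ * Matrix.fromRows 0 Atp - M)ᵀ (-S2))
    (zv wv ζ zv' : Fin n → ℝ) (hzv' : zv' = A1 *ᵥ zv + Ap *ᵥ (zv - ζ))
    (hwv : wv = zv' - zv) :
    Sum.elim (Sum.elim zv wv) ζ ⬝ᵥ Λ *ᵥ Sum.elim (Sum.elim zv wv) ζ
      = (zv' ⬝ᵥ P1 *ᵥ zv' - zv ⬝ᵥ P1 *ᵥ zv) + (h:ℝ) * (wv ⬝ᵥ S1 *ᵥ wv)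
        + zv ⬝ᵥ S2 *ᵥ zv - ζ ⬝ᵥ S2 *ᵥ ζ
        + (h:ℝ) * (Sum.elim zv wv ⬝ᵥ W *ᵥ Sum.elim zv wv)
        + 2 * (Sum.elim zv wv ⬝ᵥ M *ᵥ (zv - ζ)) := by
  have hd : (A1 - Atp - 1) *ᵥ zv - wv + Atp *ᵥ ζ = 0 := by
    subst hAtp hwv hzv'
    simp only [Matrix.sub_mulVec, Matrix.neg_mulVec, Matrix.one_mulVec, Matrix.mulVec_sub]
    abel
  have hd2 : (P2 *ᵥ zv) ⬝ᵥ ((A1 - Atp - 1) *ᵥ zv - wv + Atp *ᵥ ζ) = 0 := by rw [hd]; simp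
  have hd3 : (P3 *ᵥ wv) ⬝ᵥ ((A1 - Atp - 1) *ᵥ zv - wv + Atp *ᵥ ζ) = 0 := by rw [hd]; simp
  have hzv'' : zv' = zv + wv := by rw [hwv]; abel
  have hsym : zv ⬝ᵥ P1 *ᵥ wv = wv ⬝ᵥ P1 *ᵥ zv := by
    rw [dp_t, hP1sym]
  subst hΛ hΨ hP hW hM hG hzv''
  simp only [Matrix.transpose_sub, Matrix.transpose_mul, Matrix.transpose_transpose,
    Matrix.fromBlocks_transpose, Matrix.fromRows_mulVec, Matrix.sub_mulVec,
    Matrix.add_mulVec, Matrix.neg_mulVec, Matrix.smul_mulVec,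
    ← Matrix.mulVec_mulVec, cstar_mulVec,
    Matrix.fromBlocks_mulVec, Sum.elim_comp_inl, Sum.elim_comp_inr,
    Matrix.mulVec_add, Matrix.mulVec_sub, Matrix.one_mulVec, Matrix.zero_mulVec,
    Matrix.mulVec_zero, sumElim_dotProduct_sumElim,
    dotProduct_add, add_dotProduct, sub_dotProduct,
    dotProduct_sub, neg_dotProduct, dotProduct_neg,
    dotProduct_smul, smul_dotProduct, smul_eq_mul,
    zero_dotProduct, dotProduct_zero, dp_tt,
    dotProduct_comm] at hd2 hd3 hsym ⊢
  linear_combination (2:ℝ) * hd2 + 2 * hd3 - hsym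

lemma claimB {n : ℕ} (W : Matrix (Fin n ⊕ Fin n) (Fin n ⊕ Fin n) ℝ)
    (M : Matrix (Fin n ⊕ Fin n) (Fin n) ℝ) (S1 : Matrix (Fin n) (Fin n) ℝ)
    (ξv : Fin n ⊕ Fin n → ℝ) (v : Fin n → ℝ) :
    Sum.elim ξv v ⬝ᵥ (Matrix.fromBlocks W M Mᵀ S1) *ᵥ Sum.elim ξv v
      = ξv ⬝ᵥ W *ᵥ ξv + 2 * (ξv ⬝ᵥ M *ᵥ v) + v ⬝ᵥ S1 *ᵥ v := by
  simp only [Matrix.fromBlocks_mulVec, Sum.elim_comp_inl, Sum.elim_comp_inr,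
    sumElim_dotProduct_sumElim, dotProduct_add, dp_tt]
  ring

/-- Proposition 1 (mode-1 part): if [[W, M],[Mᵀ, S₁]] is positive semidefinite and Λ is
negative definite, then every mode-1 trajectory converges to zero. -/
theorem mode1_asymptotic_stability (n h : ℕ) (hn : 1 ≤ n) (hh : 1 ≤ h)
    (P1 S1 S2 : Matrix (Fin n) (Fin n) ℝ)
    (hP1 : P1.PosDef) (hS1 : S1.PosDef) (hS2 : S2.PosDef)
    (A1 Ap Atp : Matrix (Fin n) (Fin n) ℝ) (hAtp : Atp = -Ap)
    (P2 P3 W1 W2 W3 M1 M2 : Matrix (Fin n) (Fin n) ℝ)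
    (P W G Ψ : Matrix (Fin n ⊕ Fin n) (Fin n ⊕ Fin n) ℝ)
    (M : Matrix (Fin n ⊕ Fin n) (Fin n) ℝ)
    (hP : P = Matrix.fromBlocks P1 0 P2 P3)
    (hW : W = Matrix.fromBlocks W1 W2 W2ᵀ W3)
    (hM : M = Matrix.fromRows M1 M2)
    (hG : G = Matrix.fromBlocks 0 1 (A1 - Atp - 1) (-1))
    (hΨ : Ψ = (h : ℝ) • W + Matrix.fromBlocks S2 0 0 (P1 + (h : ℝ) • S1)
        + Matrix.fromBlocks M1 0 M2 0 + (Matrix.fromBlocks M1 0 M2 0)ᵀ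
        + Pᵀ * G + Gᵀ * P)
    (Λ : Matrix ((Fin n ⊕ Fin n) ⊕ Fin n) ((Fin n ⊕ Fin n) ⊕ Fin n) ℝ)
    (hΛ : Λ = Matrix.fromBlocks Ψ (Pᵀ * Matrix.fromRows 0 Atp - M)
        (Pᵀ * Matrix.fromRows 0 Atp - M)ᵀ (-S2))
    (z w : ℤ → Fin n → ℝ) (hw : ∀ k : ℤ, w k = z (k + 1) - z k)
    (hz : ∀ k : ℤ, 0 ≤ k → z (k + 1) = A1 *ᵥ z k + Ap *ᵥ (z k - z (k - (h : ℤ))))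
    (V : ℤ → ℝ)
    (hV : ∀ k : ℤ, V k = z k ⬝ᵥ (P1 *ᵥ z k)
        + ∑ θ ∈ Finset.Icc (-(h : ℤ) + 1) 0,
            ∑ l ∈ Finset.Icc (k - 1 + θ) (k - 1), w l ⬝ᵥ (S1 *ᵥ w l)
        + ∑ l ∈ Finset.Icc (k - (h : ℤ)) (k - 1), z l ⬝ᵥ (S2 *ᵥ z l))
    (hLMI : (Matrix.fromBlocks W M Mᵀ S1).PosSemidef)
    (hΛneg : (-Λ).PosDef) :
    Filter.Tendsto z Filter.atTop (nhds 0) := by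
  have hne : Nonempty (Fin n) := ⟨⟨0, hn⟩⟩
  have hP1sym : P1ᵀ = P1 := by
    have := hP1.1
    rwa [Matrix.IsHermitian, Matrix.conjTranspose_eq_transpose_of_trivial] at this
  obtain ⟨ε, hε, hco⟩ := posdef_coercive _ hΛneg
  -- Step 1: the change of V along any trajectory
  have step1 : ∀ k : ℤ, V (k+1) - V k
      = (z (k+1) ⬝ᵥ P1 *ᵥ z (k+1) - z k ⬝ᵥ P1 *ᵥ z k)
        + (h:ℝ) * (w k ⬝ᵥ S1 *ᵥ w k)
        - (∑ l ∈ Finset.Icc (k - (h:ℤ)) (k-1), w l ⬝ᵥ S1 *ᵥ w l)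
        + z k ⬝ᵥ S2 *ᵥ z k - z (k - (h:ℤ)) ⬝ᵥ S2 *ᵥ z (k - (h:ℤ)) := by
    intro k
    rw [hV (k+1), hV k]
    have hT3 : ∑ l ∈ Finset.Icc (k+1-(h:ℤ)) (k+1-1), z l ⬝ᵥ S2 *ᵥ z l
        - ∑ l ∈ Finset.Icc (k-(h:ℤ)) (k-1), z l ⬝ᵥ S2 *ᵥ z l
        = z k ⬝ᵥ S2 *ᵥ z k - z (k - (h:ℤ)) ⬝ᵥ S2 *ᵥ z (k - (h:ℤ)) := by
      rw [show k+1-1 = (k-1)+1 by ring, show k+1-(h:ℤ) = (k-(h:ℤ))+1 by ring,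
          Icc_top' ((k-(h:ℤ))+1) (k-1) (by omega) (fun l => z l ⬝ᵥ S2 *ᵥ z l),
          Icc_bot' (k-(h:ℤ)) (k-1) (by omega) (fun l => z l ⬝ᵥ S2 *ᵥ z l),
          show (k-1)+1 = k by ring]
      ring
    have hT2 : (∑ θ ∈ Finset.Icc (-(h:ℤ)+1) 0,
          ∑ l ∈ Finset.Icc (k+1-1+θ) (k+1-1), w l ⬝ᵥ S1 *ᵥ w l)
        - (∑ θ ∈ Finset.Icc (-(h:ℤ)+1) 0,
          ∑ l ∈ Finset.Icc (k-1+θ) (k-1), w l ⬝ᵥ S1 *ᵥ w l)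
        = (h:ℝ) * (w k ⬝ᵥ S1 *ᵥ w k)
          - ∑ l ∈ Finset.Icc (k-(h:ℤ)) (k-1), w l ⬝ᵥ S1 *ᵥ w l := by
      rw [← Finset.sum_sub_distrib]
      have hper : ∀ θ ∈ Finset.Icc (-(h:ℤ)+1) 0,
          (∑ l ∈ Finset.Icc (k+1-1+θ) (k+1-1), w l ⬝ᵥ S1 *ᵥ w l)
          - (∑ l ∈ Finset.Icc (k-1+θ) (k-1), w l ⬝ᵥ S1 *ᵥ w l)
          = w k ⬝ᵥ S1 *ᵥ w k - w (k-1+θ) ⬝ᵥ S1 *ᵥ w (k-1+θ) := by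
        intro θ hθ
        simp only [Finset.mem_Icc] at hθ
        rw [show k+1-1+θ = (k-1+θ)+1 by ring, show k+1-1 = (k-1)+1 by ring,
            Icc_top' ((k-1+θ)+1) (k-1) (by omega) (fun l => w l ⬝ᵥ S1 *ᵥ w l),
            Icc_bot' (k-1+θ) (k-1) (by omega) (fun l => w l ⬝ᵥ S1 *ᵥ w l),
            show (k-1)+1 = k by ring]
        ring
      rw [Finset.sum_congr rfl hper, Finset.sum_sub_distrib, Finset.sum_const]
      have hcard : (Finset.Icc (-(h:ℤ)+1) 0).card = h := by
        rw [Int.card_Icc]; omega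
      rw [hcard, nsmul_eq_mul,
          Icc_shift' (-(h:ℤ)+1) 0 (k-1) (fun l => w l ⬝ᵥ S1 *ᵥ w l),
          show k-1+(-(h:ℤ)+1) = k - (h:ℤ) by ring, show k-1+(0:ℤ) = k-1 by ring]
    linarith [hT2, hT3]
  -- Step 2: strict decrease along the trajectory
  have key : ∀ k : ℤ, 0 ≤ k → V (k+1) - V k ≤ -(ε * ‖z k‖^2) := by
    intro k hk
    have e2 := claimA n h P1 S1 S2 A1 Ap Atp hAtp hP1sym P2 P3 W1 W2 W3 M1 M2
      P W G Ψ M hP hW hM hG hΨ Λ hΛ (z k) (w k) (z (k-(h:ℤ))) (z (k+1))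
      (hz k hk) (hw k)
    have htel : ∑ l ∈ Finset.Icc (k-(h:ℤ)) (k-1), w l = z k - z (k-(h:ℤ)) := by
      have t := tel' z (k-(h:ℤ)) h
      rw [show k-(h:ℤ)+(h:ℤ)-1 = k-1 by ring, show k-(h:ℤ)+(h:ℤ) = k by ring] at t
      rw [← t]
      exact Finset.sum_congr rfl (fun l _ => by rw [hw l])
    have hcard2 : (Finset.Icc (k-(h:ℤ)) (k-1)).card = h := by
      rw [Int.card_Icc]; omega
    have e3 : ∑ l ∈ Finset.Icc (k-(h:ℤ)) (k-1),
        (Sum.elim (Sum.elim (z k) (w k)) (w l) ⬝ᵥ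
          (Matrix.fromBlocks W M Mᵀ S1) *ᵥ Sum.elim (Sum.elim (z k) (w k)) (w l))
        = (h:ℝ) * (Sum.elim (z k) (w k) ⬝ᵥ W *ᵥ Sum.elim (z k) (w k))
          + 2 * (Sum.elim (z k) (w k) ⬝ᵥ M *ᵥ (z k - z (k-(h:ℤ))))
          + ∑ l ∈ Finset.Icc (k-(h:ℤ)) (k-1), w l ⬝ᵥ S1 *ᵥ w l := by
      rw [Finset.sum_congr rfl (fun l _ => claimB W M S1 (Sum.elim (z k) (w k)) (w l)),
          Finset.sum_add_distrib, Finset.sum_add_distrib, Finset.sum_const, hcard2,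
          nsmul_eq_mul, ← Finset.mul_sum, ← dp_sum, ← mulVec_sum', htel]
    have hnonneg : (0:ℝ) ≤ ∑ l ∈ Finset.Icc (k-(h:ℤ)) (k-1),
        (Sum.elim (Sum.elim (z k) (w k)) (w l) ⬝ᵥ
          (Matrix.fromBlocks W M Mᵀ S1) *ᵥ Sum.elim (Sum.elim (z k) (w k)) (w l)) :=
      Finset.sum_nonneg (fun l _ => by simpa using hLMI.dotProduct_mulVec_nonneg _)
    have hΛval : Sum.elim (Sum.elim (z k) (w k)) (z (k-(h:ℤ))) ⬝ᵥ
        Λ *ᵥ Sum.elim (Sum.elim (z k) (w k)) (z (k-(h:ℤ)))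
        ≤ -(ε * ‖Sum.elim (Sum.elim (z k) (w k)) (z (k-(h:ℤ)))‖^2) := by
      have h1 := hco (Sum.elim (Sum.elim (z k) (w k)) (z (k-(h:ℤ))))
      have h2 : Sum.elim (Sum.elim (z k) (w k)) (z (k-(h:ℤ))) ⬝ᵥ
          (-Λ) *ᵥ Sum.elim (Sum.elim (z k) (w k)) (z (k-(h:ℤ)))
          = -(Sum.elim (Sum.elim (z k) (w k)) (z (k-(h:ℤ))) ⬝ᵥ
            Λ *ᵥ Sum.elim (Sum.elim (z k) (w k)) (z (k-(h:ℤ)))) := by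
        rw [Matrix.neg_mulVec, dotProduct_neg]
      linarith
    have hzη : ‖z k‖ ≤ ‖Sum.elim (Sum.elim (z k) (w k)) (z (k-(h:ℤ)))‖ := by
      refine (pi_norm_le_iff_of_nonneg (norm_nonneg _)).mpr (fun i => ?_)
      exact norm_le_pi_norm (Sum.elim (Sum.elim (z k) (w k)) (z (k-(h:ℤ))))
        (Sum.inl (Sum.inl i))
    have hsq : ε * ‖z k‖^2 ≤ ε * ‖Sum.elim (Sum.elim (z k) (w k)) (z (k-(h:ℤ)))‖^2 :=
      mul_le_mul_of_nonneg_left (pow_le_pow_left₀ (norm_nonneg _) hzη 2) hε.le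
    have hs1 := step1 k
    linarith [e2, e3, hnonneg, hΛval, hsq, hs1]
  -- V is nonnegative
  have hVpos : ∀ k : ℤ, 0 ≤ V k := by
    intro k
    rw [hV k]
    have h1 : (0:ℝ) ≤ z k ⬝ᵥ P1 *ᵥ z k := by simpa using hP1.posSemidef.dotProduct_mulVec_nonneg (z k)
    have h2 : (0:ℝ) ≤ ∑ θ ∈ Finset.Icc (-(h : ℤ) + 1) 0,
        ∑ l ∈ Finset.Icc (k - 1 + θ) (k - 1), w l ⬝ᵥ (S1 *ᵥ w l) :=
      Finset.sum_nonneg (fun θ _ => Finset.sum_nonneg (fun l _ => by simpa using hS1.posSemidef.dotProduct_mulVec_nonneg _))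
    have h3 : (0:ℝ) ≤ ∑ l ∈ Finset.Icc (k - (h : ℤ)) (k - 1), z l ⬝ᵥ (S2 *ᵥ z l) :=
      Finset.sum_nonneg (fun l _ => by simpa using hS2.posSemidef.dotProduct_mulVec_nonneg _)
    linarith
  -- bounded partial sums
  have hdesc : ∀ N : ℕ, V (N:ℤ) + ε * ∑ m ∈ Finset.range N, ‖z (m:ℤ)‖^2 ≤ V 0 := by
    intro N
    induction N with
    | zero => simp
    | succ N ih =>
      have hk := key (N:ℤ) (Int.natCast_nonneg N)
      have hc : ((N+1 : ℕ) : ℤ) = (N:ℤ)+1 := by push_cast; ring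
      rw [hc, Finset.sum_range_succ, mul_add]
      push_cast
      linarith
  have hbdd : ∀ N : ℕ, ∑ m ∈ Finset.range N, ‖z (m:ℤ)‖^2 ≤ V 0 / ε := by
    intro N
    have h1 := hdesc N
    have h2 := hVpos (N:ℤ)
    rw [le_div_iff₀ hε, mul_comm]
    linarith
  have hsummable : Summable fun m : ℕ => ‖z (m:ℤ)‖^2 :=
    summable_of_sum_range_le (fun m => sq_nonneg _) hbdd
  have htend0 : Filter.Tendsto (fun m : ℕ => ‖z (m:ℤ)‖^2) Filter.atTop (nhds 0) :=
    hsummable.tendsto_atTop_zero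
  rw [tendsto_zero_iff_norm_tendsto_zero, Metric.tendsto_atTop]
  intro δ hδ
  obtain ⟨N, hN⟩ := (Metric.tendsto_atTop).1 htend0 (δ^2) (by positivity)
  refine ⟨(N:ℤ), fun k hk => ?_⟩
  have hk0 : (0:ℤ) ≤ k := le_trans (Int.natCast_nonneg N) hk
  have h1 := hN k.toNat (by omega)
  rw [Int.toNat_of_nonneg hk0] at h1
  rw [Real.dist_eq] at h1 ⊢
  rw [sub_zero, abs_of_nonneg (norm_nonneg _)]
  rw [sub_zero, abs_of_nonneg (sq_nonneg _)] at h1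
  nlinarith [norm_nonneg (z k), hδ]
end

section
/- Let n ≥ 1 and h ≥ 1 be integers, let S₁ be a symmetric positive definite real n×n matrix, let Ã₂ be a real n×n matrix, and set S̃₁ = (Ã₂ − I)ᵀ S₁ (Ã₂ − I). Let z : ℤ → ℝⁿ be a sequence such that z_{l+1} = Ã₂ z_l for all l with k − h ≤ l ≤ k, and set w_l = z_{l+1} − z_l and V²_m = ∑_{θ=−h+1}^{0} ∑_{l=m−1+θ}^{m−1} w_lᵀ S₁ w_l. Then V²_{k+1} − V²_k = z_{k−h}ᵀ ( h·(Ã₂ʰ)ᵀ S̃₁ Ã₂ʰ − ∑_{i=0}^{h−1} (Ã₂ⁱ)ᵀ S̃₁ Ã₂ⁱ ) z_{k−h}. -/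
open Matrix


private theorem quadform_aux (n : ℕ) (M S : Matrix (Fin n) (Fin n) ℝ) (x : Fin n → ℝ) :
    (M *ᵥ x) ⬝ᵥ (S *ᵥ (M *ᵥ x)) = x ⬝ᵥ ((Mᵀ * S * M) *ᵥ x) := by
  rw [mulVec_mulVec, dotProduct_mulVec, dotProduct_mulVec, Matrix.mul_assoc,
    vecMul_mulVec]

/-- Mode-2 rewriting of the second Lyapunov–Krasovskii term: under h+1 consecutive
mode-2 steps, V²_{k+1} - V²_k = z_{k-h}ᵀ( h·(Ã₂ʰ)ᵀS̃₁Ã₂ʰ - ∑_{i=0}^{h-1}(Ã₂ⁱ)ᵀS̃₁Ã₂ⁱ )z_{k-h},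
where S̃₁ = (Ã₂ - I)ᵀS₁(Ã₂ - I). -/
theorem V2_difference_mode2 (n h : ℕ) (hn : 1 ≤ n) (hh : 1 ≤ h)
    (S1 : Matrix (Fin n) (Fin n) ℝ) (hS1 : S1.PosDef)
    (A2 : Matrix (Fin n) (Fin n) ℝ)
    (St1 : Matrix (Fin n) (Fin n) ℝ) (hSt1 : St1 = (A2 - 1)ᵀ * S1 * (A2 - 1))
    (k : ℤ) (z : ℤ → Fin n → ℝ)
    (hz : ∀ l : ℤ, k - (h : ℤ) ≤ l → l ≤ k → z (l + 1) = A2 *ᵥ z l)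
    (w : ℤ → Fin n → ℝ) (hw : ∀ l : ℤ, w l = z (l + 1) - z l)
    (V2 : ℤ → ℝ)
    (hV2 : ∀ m : ℤ, V2 m =
      ∑ θ ∈ Finset.Icc (-(h : ℤ) + 1) 0,
        ∑ l ∈ Finset.Icc (m - 1 + θ) (m - 1), w l ⬝ᵥ (S1 *ᵥ w l)) :
    V2 (k + 1) - V2 k =
      z (k - (h : ℤ)) ⬝ᵥ
        ((((h : ℝ) • ((A2 ^ h)ᵀ * St1 * A2 ^ h))
          - ∑ i ∈ Finset.range h, (A2 ^ i)ᵀ * St1 * A2 ^ i) *ᵥ z (k - (h : ℤ))) := by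
  set x := z (k - (h : ℤ)) with hx
  set f : ℤ → ℝ := fun l => w l ⬝ᵥ (S1 *ᵥ w l) with hf
  -- powers of A2
  have hzpow : ∀ i : ℕ, i ≤ h → z (k - (h : ℤ) + i) = (A2 ^ i) *ᵥ x := by
    intro i hi
    induction i with
    | zero => simp [hx]
    | succ j ih =>
      have hj : j ≤ h := Nat.le_of_succ_le hi
      have hjh : (j : ℤ) < (h : ℤ) := by exact_mod_cast hi
      have hstep : z (k - (h : ℤ) + (↑(j + 1) : ℤ)) = A2 *ᵥ z (k - (h : ℤ) + j) := by
        push_cast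
        rw [show k - (h : ℤ) + ((j : ℤ) + 1) = (k - (h : ℤ) + j) + 1 by ring]
        exact hz _ (by omega) (by omega)
      rw [hstep, ih hj, mulVec_mulVec, ← pow_succ']
  -- quadratic form at step i
  have hfeq : ∀ i : ℕ, i ≤ h → f (k - (h : ℤ) + i) =
      x ⬝ᵥ (((A2 ^ i)ᵀ * St1 * A2 ^ i) *ᵥ x) := by
    intro i hi
    have hih : (i : ℤ) ≤ (h : ℤ) := by exact_mod_cast hi
    have hwl : w (k - (h : ℤ) + i) = ((A2 - 1) * A2 ^ i) *ᵥ x := by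
      rw [hw, hz _ (by omega) (by omega), hzpow i hi, sub_mul, one_mul,
        Matrix.sub_mulVec, mulVec_mulVec]
    have := quadform_aux n ((A2 - 1) * A2 ^ i) S1 x
    simp only [hf, hwl]
    rw [this, hSt1]
    rw [Matrix.transpose_mul]
    noncomm_ring
  have hfk : f k = x ⬝ᵥ (((A2 ^ h)ᵀ * St1 * A2 ^ h) *ᵥ x) := by
    have := hfeq h le_rfl
    rwa [show k - (h : ℤ) + (h : ℕ) = k by push_cast; ring] at this
  -- per-θ telescoping
  have key : ∀ θ ∈ Finset.Icc (-(h : ℤ) + 1) 0,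
      ((∑ l ∈ Finset.Icc (k + 1 - 1 + θ) (k + 1 - 1), f l)
        - ∑ l ∈ Finset.Icc (k - 1 + θ) (k - 1), f l) = f k - f (k - 1 + θ) := by
    intro θ hθ
    simp only [Finset.mem_Icc] at hθ
    have e1 : Finset.Icc (k + 1 - 1 + θ) (k + 1 - 1) =
        insert k (Finset.Icc (k + θ) (k - 1)) := by
      ext a; simp only [Finset.mem_Icc, Finset.mem_insert]; omega
    have e2 : Finset.Icc (k - 1 + θ) (k - 1) =
        insert (k - 1 + θ) (Finset.Icc (k + θ) (k - 1)) := by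
      ext a; simp only [Finset.mem_Icc, Finset.mem_insert]; omega
    rw [e1, e2, Finset.sum_insert (by simp only [Finset.mem_Icc]; omega), Finset.sum_insert (by simp only [Finset.mem_Icc]; omega)]
    ring
  have hcard : (Finset.Icc (-(h : ℤ) + 1) 0).card = h := by
    rw [Int.card_Icc]; omega
  -- reindexing the lower sum
  have himg : Finset.Icc (-(h : ℤ) + 1) 0 =
      Finset.image (fun i : ℕ => -(h : ℤ) + 1 + i) (Finset.range h) := by
    ext a
    simp only [Finset.mem_Icc, Finset.mem_image, Finset.mem_range]
    constructor
    · intro ha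
      refine ⟨(a + h - 1).toNat, by omega, by omega⟩
    · rintro ⟨i, hi, rfl⟩; omega
  have hsum2 : ∑ θ ∈ Finset.Icc (-(h : ℤ) + 1) 0, f (k - 1 + θ) =
      ∑ i ∈ Finset.range h, x ⬝ᵥ (((A2 ^ i)ᵀ * St1 * A2 ^ i) *ᵥ x) := by
    rw [himg, Finset.sum_image (by intro a _ b _ hab; simp only at hab; omega)]
    refine Finset.sum_congr rfl ?_
    intro i hi
    simp only [Finset.mem_range] at hi
    rw [show k - 1 + (-(h : ℤ) + 1 + i) = k - (h : ℤ) + i by ring]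
    exact hfeq i hi.le
  -- put it together
  rw [hV2, hV2, ← Finset.sum_sub_distrib, Finset.sum_congr rfl key,
    Finset.sum_sub_distrib, Finset.sum_const, hcard, hsum2, hfk]
  rw [Matrix.sub_mulVec, dotProduct_sub, Matrix.smul_mulVec, dotProduct_smul]
  congr 1
  · simp
  · have hs : ∀ (s : Finset ℕ) (M : ℕ → Matrix (Fin n) (Fin n) ℝ),
        (∑ i ∈ s, M i) *ᵥ x = ∑ i ∈ s, M i *ᵥ x := by
      intro s M
      induction s using Finset.induction_on with
      | empty => simp
      | insert a s hns ih => rw [Finset.sum_insert hns, Finset.sum_insert hns, Matrix.add_mulVec, ih]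
    rw [hs]
    simp only [dotProduct, Finset.sum_apply, Finset.mul_sum]
    exact Finset.sum_comm
end

section
/- Under the stated definitions, let Q be a symmetric positive semidefinite real n×n matrix and let Q̄ be the 3n×3n block-diagonal matrix with blocks Q, 0, 0. Assume the 3n×3n block matrix [[W, M],[Mᵀ, S₁]] is positive semidefinite and that Λ + Q̄ is negative semidefinite. Then for every k ≥ 0, V_{k+1} − V_k ≤ −z_kᵀQz_k. -/
open Matrix Finset

private lemma dot_transpose' {m n : Type*} [Fintype m] [Fintype n] (B : Matrix m n ℝ)
    (u : n → ℝ) (v : m → ℝ) : u ⬝ᵥ (Bᵀ *ᵥ v) = v ⬝ᵥ (B *ᵥ u) := by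
  rw [Matrix.mulVec_transpose, Matrix.dotProduct_mulVec, dotProduct_comm]

private lemma fromBlocks_mulVec_elim' {l m o p : Type*} [Fintype l] [Fintype m]
    (A : Matrix o l ℝ) (B : Matrix o m ℝ) (C : Matrix p l ℝ) (D : Matrix p m ℝ)
    (xv : l → ℝ) (yv : m → ℝ) :
    Matrix.fromBlocks A B C D *ᵥ Sum.elim xv yv
      = Sum.elim (A *ᵥ xv + B *ᵥ yv) (C *ᵥ xv + D *ᵥ yv) := by
  rw [Matrix.fromBlocks_mulVec]
  simp [Sum.elim_comp_inl, Sum.elim_comp_inr]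

private lemma sum_Icc_shift' {E : Type*} [AddCommGroup E] (f : ℤ → E) (a b : ℤ) (hab : a ≤ b) :
    ∑ l ∈ Icc (a+1) (b+1), f l = ∑ l ∈ Icc a b, f l + f (b+1) - f a := by
  have h1 : Icc a (b+1) = (Ico a (b+1)).cons (b+1) right_notMem_Ico :=
    Icc_eq_cons_Ico (by omega)
  have h2 : Ico a (b+1) = Icc a b := by ext x; simp
  have h3 : Icc a (b+1) = (Ioc a (b+1)).cons a left_notMem_Ioc :=
    Icc_eq_cons_Ioc (by omega)
  have h4 : Ioc a (b+1) = Icc (a+1) (b+1) := by ext x; simp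
  have e1 : ∑ l ∈ Icc a (b+1), f l = f (b+1) + ∑ l ∈ Icc a b, f l := by
    rw [h1, Finset.sum_cons, h2]
  have e2 : ∑ l ∈ Icc a (b+1), f l = f a + ∑ l ∈ Icc (a+1) (b+1), f l := by
    rw [h3, Finset.sum_cons, h4]
  rw [e1] at e2
  calc ∑ l ∈ Icc (a+1) (b+1), f l = f a + ∑ l ∈ Icc (a+1) (b+1), f l - f a := by abel
    _ = (f (b+1) + ∑ l ∈ Icc a b, f l) - f a := by rw [← e2]
    _ = ∑ l ∈ Icc a b, f l + f (b+1) - f a := by abel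

private lemma sum_Icc_telescope' {E : Type*} [AddCommGroup E] (g : ℤ → E) (a : ℤ) (m : ℕ) :
    ∑ l ∈ Icc a (a + m), (g (l+1) - g l) = g (a + m + 1) - g a := by
  induction m with
  | zero => simp
  | succ m ih =>
      have h1 : Icc a (a + (m+1:ℕ)) = (Ico a (a + (m+1:ℕ))).cons (a + (m+1:ℕ))
          right_notMem_Ico := Icc_eq_cons_Ico (by push_cast; omega)
      have h2 : Ico a (a + (m+1:ℕ)) = Icc a (a + m) := by ext x; simp; omega
      rw [h1, Finset.sum_cons, h2, ih]
      push_cast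
      have : a + ((m:ℤ)+1) = a + m + 1 := by ring
      rw [this]
      abel

/-- Strengthened LMI step of Proposition 2: if [[W, M],[Mᵀ, S₁]] is positive
semidefinite and Λ + Q̄ is negative semidefinite (Q̄ = blockdiag(Q,0,0) with Q
positive semidefinite), then V_{k+1} - V_k ≤ -z_kᵀQz_k along mode-1 trajectories. -/
theorem LK_difference_cost_bound (n h : ℕ) (hn : 1 ≤ n) (hh : 1 ≤ h)
    (P1 S1 S2 : Matrix (Fin n) (Fin n) ℝ)
    (hP1 : P1.PosDef) (hS1 : S1.PosDef) (hS2 : S2.PosDef)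
    (A1 Ap Atp : Matrix (Fin n) (Fin n) ℝ) (hAtp : Atp = -Ap)
    (P2 P3 W1 W2 W3 M1 M2 : Matrix (Fin n) (Fin n) ℝ)
    (P W G Ψ : Matrix (Fin n ⊕ Fin n) (Fin n ⊕ Fin n) ℝ)
    (M : Matrix (Fin n ⊕ Fin n) (Fin n) ℝ)
    (hP : P = Matrix.fromBlocks P1 0 P2 P3)
    (hW : W = Matrix.fromBlocks W1 W2 W2ᵀ W3)
    (hM : M = Matrix.fromRows M1 M2)
    (hG : G = Matrix.fromBlocks 0 1 (A1 - Atp - 1) (-1))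
    (hΨ : Ψ = (h : ℝ) • W + Matrix.fromBlocks S2 0 0 (P1 + (h : ℝ) • S1)
        + Matrix.fromBlocks M1 0 M2 0 + (Matrix.fromBlocks M1 0 M2 0)ᵀ
        + Pᵀ * G + Gᵀ * P)
    (Λ : Matrix ((Fin n ⊕ Fin n) ⊕ Fin n) ((Fin n ⊕ Fin n) ⊕ Fin n) ℝ)
    (hΛ : Λ = Matrix.fromBlocks Ψ (Pᵀ * Matrix.fromRows 0 Atp - M)
        (Pᵀ * Matrix.fromRows 0 Atp - M)ᵀ (-S2))
    (z w : ℤ → Fin n → ℝ) (hw : ∀ k : ℤ, w k = z (k + 1) - z k)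
    (hz : ∀ k : ℤ, 0 ≤ k → z (k + 1) = A1 *ᵥ z k + Ap *ᵥ (z k - z (k - (h : ℤ))))
    (V : ℤ → ℝ)
    (hV : ∀ k : ℤ, V k = z k ⬝ᵥ (P1 *ᵥ z k)
        + ∑ θ ∈ Finset.Icc (-(h : ℤ) + 1) 0,
            ∑ l ∈ Finset.Icc (k - 1 + θ) (k - 1), w l ⬝ᵥ (S1 *ᵥ w l)
        + ∑ l ∈ Finset.Icc (k - (h : ℤ)) (k - 1), z l ⬝ᵥ (S2 *ᵥ z l))
    (hLMI : (Matrix.fromBlocks W M Mᵀ S1).PosSemidef)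
    (Q : Matrix (Fin n) (Fin n) ℝ) (hQ : Q.PosSemidef)
    (Qbar : Matrix ((Fin n ⊕ Fin n) ⊕ Fin n) ((Fin n ⊕ Fin n) ⊕ Fin n) ℝ)
    (hQbar : Qbar = Matrix.fromBlocks (Matrix.fromBlocks Q 0 0 0) 0 0 0)
    (hΛQ : (-(Λ + Qbar)).PosSemidef) :
    ∀ k : ℤ, 0 ≤ k →
      V (k + 1) - V k ≤ -(z k ⬝ᵥ (Q *ᵥ z k)) := by
  have hP1t : P1ᵀ = P1 := by
    have := hP1.1
    rwa [Matrix.IsHermitian, Matrix.conjTranspose_eq_transpose_of_trivial] at this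
  intro k hk
  -- abbreviations
  set x : Fin n → ℝ := z k with hx
  set u : Fin n → ℝ := z (k - (h : ℤ)) with hu
  set y : Fin n → ℝ := w k with hy
  set ζ : Fin n ⊕ Fin n → ℝ := Sum.elim x y with hζ
  set q : ℤ → ℝ := fun l => w l ⬝ᵥ (S1 *ᵥ w l) with hqdef
  have hdyn : y = A1 *ᵥ x + Ap *ᵥ (x - u) - x := by
    rw [hy, hw k, hz k hk]
  have hzk1 : z (k + 1) = x + y := by
    rw [hy, hw k, hx]; abel
  -- cardinalities
  have hcard1 : (Icc (-(h:ℤ)+1) 0).card = h := by rw [Int.card_Icc]; omega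
  have hcard2 : (Icc (k-(h:ℤ)) (k-1)).card = h := by rw [Int.card_Icc]; omega
  -- reindexing lemma
  have hreidx : ∀ f : ℤ → ℝ,
      ∑ θ ∈ Icc (-(h:ℤ)+1) 0, f (k-1+θ) = ∑ l ∈ Icc (k-(h:ℤ)) (k-1), f l := by
    intro f
    have e : Icc (k-(h:ℤ)) (k-1) = (Icc (-(h:ℤ)+1) 0).map (addLeftEmbedding (k-1)) := by
      rw [Finset.map_add_left_Icc]; congr 1 <;> ring
    rw [e, Finset.sum_map]; rfl
  -- (a) leading quadratic term
  have hT1 : z (k+1) ⬝ᵥ (P1 *ᵥ z (k+1))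
      = x ⬝ᵥ (P1 *ᵥ x) + 2*(x ⬝ᵥ (P1 *ᵥ y)) + y ⬝ᵥ (P1 *ᵥ y) := by
    have hsymm : y ⬝ᵥ (P1 *ᵥ x) = x ⬝ᵥ (P1 *ᵥ y) := by
      conv_lhs => rw [← hP1t]
      rw [dot_transpose']
    rw [hzk1, Matrix.mulVec_add, dotProduct_add, add_dotProduct,
      add_dotProduct, hsymm]
    ring
  -- (b) S2 sum difference
  have hT3 : ∑ l ∈ Icc (k+1-(h:ℤ)) (k+1-1), z l ⬝ᵥ (S2 *ᵥ z l)
      = ∑ l ∈ Icc (k-(h:ℤ)) (k-1), z l ⬝ᵥ (S2 *ᵥ z l)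
        + x ⬝ᵥ (S2 *ᵥ x) - u ⬝ᵥ (S2 *ᵥ u) := by
    have e : Icc (k+1-(h:ℤ)) (k+1-1) = Icc ((k-(h:ℤ))+1) ((k-1)+1) := by
      congr 1 <;> ring
    rw [e, sum_Icc_shift' _ _ _ (by omega)]
    have e2 : k - 1 + 1 = k := by ring
    rw [e2, hx, hu]
  -- (c) double sum difference
  have hT2 : ∑ θ ∈ Icc (-(h:ℤ)+1) 0, ∑ l ∈ Icc (k+1-1+θ) (k+1-1), q l
      = ∑ θ ∈ Icc (-(h:ℤ)+1) 0, ∑ l ∈ Icc (k-1+θ) (k-1), q l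
        + (h:ℝ) * q k - ∑ l ∈ Icc (k-(h:ℤ)) (k-1), q l := by
    have per : ∀ θ ∈ Icc (-(h:ℤ)+1) 0, ∑ l ∈ Icc (k+1-1+θ) (k+1-1), q l
        = ∑ l ∈ Icc (k-1+θ) (k-1), q l + q k - q (k-1+θ) := by
      intro θ hθ
      simp only [Finset.mem_Icc] at hθ
      have e : Icc (k+1-1+θ) (k+1-1) = Icc ((k-1+θ)+1) ((k-1)+1) := by
        congr 1 <;> ring
      rw [e, sum_Icc_shift' _ _ _ (by omega)]
      have e2 : k - 1 + 1 = k := by ring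
      rw [e2]
    rw [Finset.sum_congr rfl per, Finset.sum_sub_distrib, Finset.sum_add_distrib,
      Finset.sum_const, hcard1, hreidx q, nsmul_eq_mul]
  -- ΔV formula
  have hΔ : V (k+1) - V k
      = 2*(x ⬝ᵥ (P1 *ᵥ y)) + y ⬝ᵥ (P1 *ᵥ y) + (h:ℝ)*(y ⬝ᵥ (S1 *ᵥ y))
        - (∑ l ∈ Icc (k-(h:ℤ)) (k-1), q l) + x ⬝ᵥ (S2 *ᵥ x) - u ⬝ᵥ (S2 *ᵥ u) := by
    rw [hV (k+1), hV k, hT1, hT2, hT3]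
    have : q k = y ⬝ᵥ (S1 *ᵥ y) := by rw [hqdef, hy]
    rw [this, hx]
    ring
  -- per-term LMI inequality
  have hq : ∀ l : ℤ, 0 ≤ ζ ⬝ᵥ (W *ᵥ ζ) + 2*(ζ ⬝ᵥ (M *ᵥ w l)) + q l := by
    intro l
    have h0 := hLMI.dotProduct_mulVec_nonneg (Sum.elim ζ (w l))
    rw [star_trivial, fromBlocks_mulVec_elim', sumElim_dotProduct_sumElim,
      dotProduct_add, dotProduct_add, dot_transpose'] at h0
    rw [hqdef]
    dsimp only
    linarith
  -- telescoping
  have htel : ∑ l ∈ Icc (k-(h:ℤ)) (k-1), w l = x - u := by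
    have e : Icc (k-(h:ℤ)) (k-1) = Icc (k-(h:ℤ)) ((k-(h:ℤ)) + ((h-1:ℕ):ℤ)) := by
      congr 1; push_cast; omega
    rw [e]
    have e3 : (k-(h:ℤ)) + ((h-1:ℕ):ℤ) + 1 = k := by push_cast; omega
    calc ∑ l ∈ Icc (k-(h:ℤ)) ((k-(h:ℤ)) + ((h-1:ℕ):ℤ)), w l
        = ∑ l ∈ Icc (k-(h:ℤ)) ((k-(h:ℤ)) + ((h-1:ℕ):ℤ)), (z (l+1) - z l) :=
          Finset.sum_congr rfl (fun l _ => hw l)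
      _ = z ((k-(h:ℤ)) + ((h-1:ℕ):ℤ) + 1) - z (k-(h:ℤ)) := sum_Icc_telescope' z _ _
      _ = x - u := by rw [e3, hx, hu]
  -- linearity of the M-term
  have hlin : ∀ s : Finset ℤ, ∑ l ∈ s, ζ ⬝ᵥ (M *ᵥ w l) = ζ ⬝ᵥ (M *ᵥ (∑ l ∈ s, w l)) := by
    intro s
    induction s using Finset.cons_induction with
    | empty => simp
    | cons a s ha ih =>
        rw [Finset.sum_cons, Finset.sum_cons, Matrix.mulVec_add, dotProduct_add, ih]
  -- summed LMI inequality
  have hsum : 0 ≤ (h:ℝ)*(ζ ⬝ᵥ (W *ᵥ ζ)) + 2*(ζ ⬝ᵥ (M *ᵥ (x-u)))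
      + ∑ l ∈ Icc (k-(h:ℤ)) (k-1), q l := by
    have h1 : (0:ℝ) ≤ ∑ l ∈ Icc (k-(h:ℤ)) (k-1),
        (ζ ⬝ᵥ (W *ᵥ ζ) + 2*(ζ ⬝ᵥ (M *ᵥ w l)) + q l) :=
      Finset.sum_nonneg (fun l _ => hq l)
    rw [Finset.sum_add_distrib, Finset.sum_add_distrib, Finset.sum_const, hcard2,
      nsmul_eq_mul, ← Finset.mul_sum, hlin, htel] at h1
    linarith
  -- the big algebraic identity
  have hId : Sum.elim ζ u ⬝ᵥ (Λ *ᵥ Sum.elim ζ u)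
      = (h:ℝ) * (ζ ⬝ᵥ (W *ᵥ ζ)) + 2 * (ζ ⬝ᵥ (M *ᵥ (x - u)))
        + x ⬝ᵥ (S2 *ᵥ x) + y ⬝ᵥ (P1 *ᵥ y) + (h:ℝ) * (y ⬝ᵥ (S1 *ᵥ y))
        + 2 * (x ⬝ᵥ (P1 *ᵥ y)) - u ⬝ᵥ (S2 *ᵥ u) := by
    set B : Matrix (Fin n ⊕ Fin n) (Fin n) ℝ := Pᵀ * Matrix.fromRows 0 Atp - M with hB
    have step1 : Sum.elim ζ u ⬝ᵥ (Λ *ᵥ Sum.elim ζ u)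
        = ζ ⬝ᵥ (Ψ *ᵥ ζ) + 2 * (ζ ⬝ᵥ (B *ᵥ u)) - u ⬝ᵥ (S2 *ᵥ u) := by
      rw [hΛ, fromBlocks_mulVec_elim', sumElim_dotProduct_sumElim,
        dotProduct_add, dotProduct_add, dot_transpose',
        Matrix.neg_mulVec, dotProduct_neg]
      ring
    have hGR : G *ᵥ ζ + (Matrix.fromRows 0 Atp : Matrix (Fin n ⊕ Fin n) (Fin n) ℝ) *ᵥ u
        = Sum.elim y 0 := by
      rw [hG, hζ, fromBlocks_mulVec_elim', Matrix.fromRows_mulVec]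
      funext i
      cases i with
      | inl i =>
          simp only [Sum.elim_inl, Pi.add_apply, Matrix.zero_mulVec, Matrix.one_mulVec,
            Pi.zero_apply]
          ring
      | inr i =>
          simp only [Sum.elim_inr, Pi.add_apply, Pi.zero_apply]
          have : (A1 - Atp - 1) *ᵥ x + (-1 : Matrix (Fin n) (Fin n) ℝ) *ᵥ y + Atp *ᵥ u = 0 := by
            rw [hAtp, hdyn]
            simp only [Matrix.sub_mulVec, Matrix.add_mulVec, Matrix.neg_mulVec,
              Matrix.mulVec_sub, Matrix.one_mulVec]
            abel
          exact congrFun this i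
    have hPz : ζ ⬝ᵥ (Pᵀ *ᵥ Sum.elim y 0) = x ⬝ᵥ (P1 *ᵥ y) := by
      conv_rhs => rw [← hP1t, dot_transpose']
      rw [dot_transpose', hP, hζ, fromBlocks_mulVec_elim',
        sumElim_dotProduct_sumElim]
      simp
    have hNz : ζ ⬝ᵥ ((Matrix.fromBlocks M1 0 M2 0 : Matrix (Fin n ⊕ Fin n) (Fin n ⊕ Fin n) ℝ) *ᵥ ζ)
        = ζ ⬝ᵥ (M *ᵥ x) := by
      rw [hM, hζ, fromBlocks_mulVec_elim', Matrix.fromRows_mulVec,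
        sumElim_dotProduct_sumElim, sumElim_dotProduct_sumElim]
      simp
    have step2 : ζ ⬝ᵥ (Ψ *ᵥ ζ) = (h:ℝ) * (ζ ⬝ᵥ (W *ᵥ ζ)) + x ⬝ᵥ (S2 *ᵥ x) + y ⬝ᵥ (P1 *ᵥ y)
        + (h:ℝ) * (y ⬝ᵥ (S1 *ᵥ y)) + 2 * (ζ ⬝ᵥ (M *ᵥ x)) + 2 * (ζ ⬝ᵥ (Pᵀ *ᵥ (G *ᵥ ζ))) := by
      rw [hΨ]
      simp only [Matrix.add_mulVec, dotProduct_add]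
      have e1 : ζ ⬝ᵥ (((h:ℝ) • W) *ᵥ ζ) = (h:ℝ) * (ζ ⬝ᵥ (W *ᵥ ζ)) := by
        rw [Matrix.smul_mulVec, dotProduct_smul, smul_eq_mul]
      have e2 : ζ ⬝ᵥ ((Matrix.fromBlocks S2 0 0 (P1 + (h:ℝ) • S1) :
            Matrix (Fin n ⊕ Fin n) (Fin n ⊕ Fin n) ℝ) *ᵥ ζ)
          = x ⬝ᵥ (S2 *ᵥ x) + y ⬝ᵥ (P1 *ᵥ y) + (h:ℝ) * (y ⬝ᵥ (S1 *ᵥ y)) := by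
        rw [hζ, fromBlocks_mulVec_elim', sumElim_dotProduct_sumElim]
        simp [Matrix.add_mulVec, Matrix.smul_mulVec, dotProduct_smul]
        ring
      have e3 : ζ ⬝ᵥ ((Matrix.fromBlocks M1 0 M2 0)ᵀ *ᵥ ζ) = ζ ⬝ᵥ (M *ᵥ x) := by
        rw [dot_transpose', hNz]
      have e4 : ζ ⬝ᵥ ((Pᵀ * G) *ᵥ ζ) = ζ ⬝ᵥ (Pᵀ *ᵥ (G *ᵥ ζ)) := by
        rw [Matrix.mulVec_mulVec]
      have e5 : ζ ⬝ᵥ ((Gᵀ * P) *ᵥ ζ) = ζ ⬝ᵥ (Pᵀ *ᵥ (G *ᵥ ζ)) := by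
        have : Gᵀ * P = (Pᵀ * G)ᵀ := by rw [Matrix.transpose_mul, Matrix.transpose_transpose]
        rw [this, dot_transpose', Matrix.mulVec_mulVec]
      rw [e1, e2, hNz, e3, e4, e5]
      ring
    have step3 : ζ ⬝ᵥ (B *ᵥ u)
        = ζ ⬝ᵥ (Pᵀ *ᵥ ((Matrix.fromRows 0 Atp : Matrix (Fin n ⊕ Fin n) (Fin n) ℝ) *ᵥ u))
          - ζ ⬝ᵥ (M *ᵥ u) := by
      rw [hB, Matrix.sub_mulVec, dotProduct_sub, Matrix.mulVec_mulVec]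
      rfl
    have hMxu : ζ ⬝ᵥ (M *ᵥ x) - ζ ⬝ᵥ (M *ᵥ u) = ζ ⬝ᵥ (M *ᵥ (x - u)) := by
      rw [Matrix.mulVec_sub, dotProduct_sub]
    have hcombine : ζ ⬝ᵥ (Pᵀ *ᵥ (G *ᵥ ζ))
        + ζ ⬝ᵥ (Pᵀ *ᵥ ((Matrix.fromRows 0 Atp : Matrix (Fin n ⊕ Fin n) (Fin n) ℝ) *ᵥ u))
        = x ⬝ᵥ (P1 *ᵥ y) := by
      rw [← dotProduct_add, ← Matrix.mulVec_add, hGR, hPz]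
    rw [step1, step2, step3, ← hMxu]
    linarith [hcombine]
  -- negative semidefiniteness bound
  have hQb : Sum.elim ζ u ⬝ᵥ (Qbar *ᵥ Sum.elim ζ u) = x ⬝ᵥ (Q *ᵥ x) := by
    rw [hQbar, fromBlocks_mulVec_elim', sumElim_dotProduct_sumElim, hζ]
    simp [fromBlocks_mulVec_elim', sumElim_dotProduct_sumElim]
  have hneg : Sum.elim ζ u ⬝ᵥ (Λ *ᵥ Sum.elim ζ u) ≤ -(x ⬝ᵥ (Q *ᵥ x)) := by
    have h0 := hΛQ.dotProduct_mulVec_nonneg (Sum.elim ζ u)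
    rw [star_trivial, Matrix.neg_mulVec, dotProduct_neg, Matrix.add_mulVec,
      dotProduct_add, hQb] at h0
    linarith
  rw [hΔ]
  rw [hId] at hneg
  rw [hx]
  linarith [hsum, hneg]
end

section
/- Under the stated definitions, let Q be a symmetric positive semidefinite real n×n matrix and Q̄ the 3n×3n block-diagonal matrix with blocks Q, 0, 0. Assume the 3n×3n block matrix [[W, M],[Mᵀ, S₁]] is positive semidefinite, Λ + Q̄ is negative semidefinite, and the mode-1 trajectory z has constant initial history z_l = z₀ for all l ≤ 0. Then the series J = ∑_{k=0}^{∞} z_kᵀQz_k converges and J ≤ z₀ᵀ (P₁ + h·S₂) z₀. -/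
open Matrix

private lemma dot_tr {α β : Type*} [Fintype α] [Fintype β]
    (A : Matrix α β ℝ) (a : β → ℝ) (b : α → ℝ) :
    a ⬝ᵥ (Aᵀ *ᵥ b) = b ⬝ᵥ (A *ᵥ a) := by
  rw [Matrix.dotProduct_mulVec, Matrix.vecMul_transpose, dotProduct_comm]

private lemma quad_block {α β : Type*} [Fintype α] [Fintype β]
    (A : Matrix α α ℝ) (B : Matrix α β ℝ) (C : Matrix β α ℝ) (D : Matrix β β ℝ)
    (a : α → ℝ) (b : β → ℝ) (c : α → ℝ) (d : β → ℝ) :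
    Sum.elim a b ⬝ᵥ (Matrix.fromBlocks A B C D *ᵥ Sum.elim c d)
      = a ⬝ᵥ (A *ᵥ c) + a ⬝ᵥ (B *ᵥ d) + b ⬝ᵥ (C *ᵥ c) + b ⬝ᵥ (D *ᵥ d) := by
  rw [Matrix.fromBlocks_mulVec, sumElim_dotProduct_sumElim,
    dotProduct_add, dotProduct_add, Sum.elim_comp_inl, Sum.elim_comp_inr]
  ring

private lemma dot_mulVec_sum {α : Type*} [Fintype α] {ι : Type*} (s : Finset ι)
    (a : α → ℝ) (A : Matrix α α ℝ) (f : ι → α → ℝ) :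
    a ⬝ᵥ (A *ᵥ (∑ l ∈ s, f l)) = ∑ l ∈ s, a ⬝ᵥ (A *ᵥ f l) := by
  classical
  induction s using Finset.induction with
  | empty => simp
  | insert _ _ hns ih =>
    rw [Finset.sum_insert hns, Finset.sum_insert hns, Matrix.mulVec_add, dotProduct_add, ih]

/-- Proposition 2 (mode-1 part): under the strengthened LMIs and a constant initial
history, the quadratic cost J = ∑ z_kᵀQz_k converges and J ≤ z₀ᵀ(P₁ + h·S₂)z₀. -/
theorem prop2_cost_bound (n h : ℕ) (hn : 1 ≤ n) (hh : 1 ≤ h)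
    (P1 S1 S2 : Matrix (Fin n) (Fin n) ℝ)
    (hP1 : P1.PosDef) (hS1 : S1.PosDef) (hS2 : S2.PosDef)
    (A1 Ap Atp : Matrix (Fin n) (Fin n) ℝ) (hAtp : Atp = -Ap)
    (P2 P3 W1 W2 W3 M1 M2 : Matrix (Fin n) (Fin n) ℝ)
    (P W G Ψ : Matrix (Fin n ⊕ Fin n) (Fin n ⊕ Fin n) ℝ)
    (M : Matrix (Fin n ⊕ Fin n) (Fin n) ℝ)
    (hP : P = Matrix.fromBlocks P1 0 P2 P3)
    (hW : W = Matrix.fromBlocks W1 W2 W2ᵀ W3)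
    (hM : M = Matrix.fromRows M1 M2)
    (hG : G = Matrix.fromBlocks 0 1 (A1 - Atp - 1) (-1))
    (hΨ : Ψ = (h : ℝ) • W + Matrix.fromBlocks S2 0 0 (P1 + (h : ℝ) • S1)
        + Matrix.fromBlocks M1 0 M2 0 + (Matrix.fromBlocks M1 0 M2 0)ᵀ
        + Pᵀ * G + Gᵀ * P)
    (Λ : Matrix ((Fin n ⊕ Fin n) ⊕ Fin n) ((Fin n ⊕ Fin n) ⊕ Fin n) ℝ)
    (hΛ : Λ = Matrix.fromBlocks Ψ (Pᵀ * Matrix.fromRows 0 Atp - M)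
        (Pᵀ * Matrix.fromRows 0 Atp - M)ᵀ (-S2))
    (z w : ℤ → Fin n → ℝ) (hw : ∀ k : ℤ, w k = z (k + 1) - z k)
    (hz : ∀ k : ℤ, 0 ≤ k → z (k + 1) = A1 *ᵥ z k + Ap *ᵥ (z k - z (k - (h : ℤ))))
    (V : ℤ → ℝ)
    (hV : ∀ k : ℤ, V k = z k ⬝ᵥ (P1 *ᵥ z k)
        + ∑ θ ∈ Finset.Icc (-(h : ℤ) + 1) 0,
            ∑ l ∈ Finset.Icc (k - 1 + θ) (k - 1), w l ⬝ᵥ (S1 *ᵥ w l)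
        + ∑ l ∈ Finset.Icc (k - (h : ℤ)) (k - 1), z l ⬝ᵥ (S2 *ᵥ z l))
    (hLMI : (Matrix.fromBlocks W M Mᵀ S1).PosSemidef)
    (Q : Matrix (Fin n) (Fin n) ℝ) (hQ : Q.PosSemidef)
    (Qbar : Matrix ((Fin n ⊕ Fin n) ⊕ Fin n) ((Fin n ⊕ Fin n) ⊕ Fin n) ℝ)
    (hQbar : Qbar = Matrix.fromBlocks (Matrix.fromBlocks Q 0 0 0) 0 0 0)
    (hΛQ : (-(Λ + Qbar)).PosSemidef)
    (hhist : ∀ l : ℤ, l ≤ 0 → z l = z 0) :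
    Summable (fun k : ℕ => z (k : ℤ) ⬝ᵥ (Q *ᵥ z (k : ℤ))) ∧
      (∑' k : ℕ, z (k : ℤ) ⬝ᵥ (Q *ᵥ z (k : ℤ))) ≤ z 0 ⬝ᵥ ((P1 + (h : ℝ) • S2) *ᵥ z 0) := by
  classical
  have hQpos : ∀ v : Fin n → ℝ, 0 ≤ v ⬝ᵥ (Q *ᵥ v) := fun v => by simpa using hQ.dotProduct_mulVec_nonneg v
  have hP1pos : ∀ v : Fin n → ℝ, 0 ≤ v ⬝ᵥ (P1 *ᵥ v) := fun v => by
    simpa using hP1.posSemidef.dotProduct_mulVec_nonneg v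
  have hS1pos : ∀ v : Fin n → ℝ, 0 ≤ v ⬝ᵥ (S1 *ᵥ v) := fun v => by
    simpa using hS1.posSemidef.dotProduct_mulVec_nonneg v
  have hS2pos : ∀ v : Fin n → ℝ, 0 ≤ v ⬝ᵥ (S2 *ᵥ v) := fun v => by
    simpa using hS2.posSemidef.dotProduct_mulVec_nonneg v
  have hP1t : P1ᵀ = P1 := by
    have h0 : P1ᴴ = P1 := hP1.1
    rwa [Matrix.conjTranspose_eq_transpose_of_trivial] at h0
  -- V is nonnegative
  have hVpos : ∀ k : ℤ, 0 ≤ V k := by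
    intro k
    rw [hV k]
    have t1 : (0:ℝ) ≤ ∑ θ ∈ Finset.Icc (-(h : ℤ) + 1) 0,
        ∑ l ∈ Finset.Icc (k - 1 + θ) (k - 1), w l ⬝ᵥ (S1 *ᵥ w l) :=
      Finset.sum_nonneg fun θ _ => Finset.sum_nonneg fun l _ => hS1pos _
    have t2 : (0:ℝ) ≤ ∑ l ∈ Finset.Icc (k - (h : ℤ)) (k - 1), z l ⬝ᵥ (S2 *ᵥ z l) :=
      Finset.sum_nonneg fun l _ => hS2pos _
    have := hP1pos (z k)
    linarith
  -- increments vanish on the past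
  have hw0 : ∀ l : ℤ, l ≤ -1 → w l = 0 := by
    intro l hl
    rw [hw l, hhist l (by omega), hhist (l + 1) (by omega), sub_self]
  -- value of V at 0
  have hV0 : V 0 = z 0 ⬝ᵥ ((P1 + (h : ℝ) • S2) *ᵥ z 0) := by
    rw [hV 0]
    have e1 : ∑ θ ∈ Finset.Icc (-(h : ℤ) + 1) 0,
        ∑ l ∈ Finset.Icc ((0:ℤ) - 1 + θ) ((0:ℤ) - 1), w l ⬝ᵥ (S1 *ᵥ w l) = 0 := by
      refine Finset.sum_eq_zero fun θ hθ => Finset.sum_eq_zero fun l hl => ?_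
      simp only [Finset.mem_Icc] at hl
      rw [hw0 l (by omega)]
      simp
    have e2 : ∑ l ∈ Finset.Icc ((0:ℤ) - (h : ℤ)) ((0:ℤ) - 1), z l ⬝ᵥ (S2 *ᵥ z l)
        = (h : ℝ) * (z 0 ⬝ᵥ (S2 *ᵥ z 0)) := by
      have hc : ∀ l ∈ Finset.Icc ((0:ℤ) - (h : ℤ)) ((0:ℤ) - 1),
          z l ⬝ᵥ (S2 *ᵥ z l) = z 0 ⬝ᵥ (S2 *ᵥ z 0) := by
        intro l hl
        simp only [Finset.mem_Icc] at hl
        rw [hhist l (by omega)]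
      rw [Finset.sum_congr rfl hc, Finset.sum_const, Int.card_Icc]
      have : ((0:ℤ) - 1 + 1 - ((0:ℤ) - (h : ℤ))).toNat = h := by omega
      rw [this, nsmul_eq_mul]
    rw [e1, e2, Matrix.add_mulVec, Matrix.smul_mulVec, dotProduct_add, dotProduct_smul,
      smul_eq_mul]
    ring
  -- telescoping sum of increments
  have tele : ∀ (m : ℕ) (k : ℤ),
      ∑ l ∈ Finset.Icc (k - (m : ℤ)) (k - 1), w l = z k - z (k - (m : ℤ)) := by
    intro m
    induction m with
    | zero =>
      intro k
      rw [Nat.cast_zero, sub_zero, Finset.Icc_eq_empty (by omega), Finset.sum_empty, sub_self]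
    | succ m ih =>
      intro k
      have hc : ((m + 1 : ℕ) : ℤ) = (m : ℤ) + 1 := by push_cast; ring
      rw [hc]
      have hins : Finset.Icc (k - ((m : ℤ) + 1)) (k - 1)
          = insert (k - ((m : ℤ) + 1)) (Finset.Icc (k - (m : ℤ)) (k - 1)) := by
        ext l
        simp only [Finset.mem_Icc, Finset.mem_insert]
        omega
      have hnm : (k - ((m : ℤ) + 1)) ∉ Finset.Icc (k - (m : ℤ)) (k - 1) := by
        simp only [Finset.mem_Icc]
        omega
      rw [hins, Finset.sum_insert hnm, ih k, hw (k - ((m : ℤ) + 1))]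
      have he : k - ((m : ℤ) + 1) + 1 = k - (m : ℤ) := by ring
      rw [he]
      abel
  -- difference of the double sums
  have sdiff : ∀ k : ℤ,
      (∑ θ ∈ Finset.Icc (-(h : ℤ) + 1) 0, ∑ l ∈ Finset.Icc (k + θ) k, w l ⬝ᵥ (S1 *ᵥ w l))
      - (∑ θ ∈ Finset.Icc (-(h : ℤ) + 1) 0,
          ∑ l ∈ Finset.Icc (k - 1 + θ) (k - 1), w l ⬝ᵥ (S1 *ᵥ w l))
      = (h : ℝ) * (w k ⬝ᵥ (S1 *ᵥ w k))
        - ∑ l ∈ Finset.Icc (k - (h : ℤ)) (k - 1), w l ⬝ᵥ (S1 *ᵥ w l) := by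
    intro k
    rw [← Finset.sum_sub_distrib]
    have inner : ∀ θ ∈ Finset.Icc (-(h : ℤ) + 1) 0,
        (∑ l ∈ Finset.Icc (k + θ) k, w l ⬝ᵥ (S1 *ᵥ w l))
        - (∑ l ∈ Finset.Icc (k - 1 + θ) (k - 1), w l ⬝ᵥ (S1 *ᵥ w l))
        = w k ⬝ᵥ (S1 *ᵥ w k) - w (k - 1 + θ) ⬝ᵥ (S1 *ᵥ w (k - 1 + θ)) := by
      intro θ hθ
      simp only [Finset.mem_Icc] at hθ
      have h1 : Finset.Icc (k + θ) k = insert k (Finset.Icc (k + θ) (k - 1)) := by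
        ext l
        simp only [Finset.mem_Icc, Finset.mem_insert]
        omega
      have h2 : Finset.Icc (k - 1 + θ) (k - 1)
          = insert (k - 1 + θ) (Finset.Icc (k + θ) (k - 1)) := by
        ext l
        simp only [Finset.mem_Icc, Finset.mem_insert]
        omega
      have n1 : k ∉ Finset.Icc (k + θ) (k - 1) := by simp only [Finset.mem_Icc]; omega
      have n2 : k - 1 + θ ∉ Finset.Icc (k + θ) (k - 1) := by
        simp only [Finset.mem_Icc]; omega
      rw [h1, h2, Finset.sum_insert n1, Finset.sum_insert n2]
      ring
    rw [Finset.sum_congr rfl inner, Finset.sum_sub_distrib, Finset.sum_const, Int.card_Icc]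
    have hcard : ((0:ℤ) + 1 - (-(h : ℤ) + 1)).toNat = h := by omega
    rw [hcard]
    have reidx : ∑ θ ∈ Finset.Icc (-(h : ℤ) + 1) 0, w (k - 1 + θ) ⬝ᵥ (S1 *ᵥ w (k - 1 + θ))
        = ∑ l ∈ Finset.Icc (k - (h : ℤ)) (k - 1), w l ⬝ᵥ (S1 *ᵥ w l) := by
      have hmap : Finset.Icc (k - (h : ℤ)) (k - 1)
          = (Finset.Icc (-(h : ℤ) + 1) 0).map (addLeftEmbedding (k - 1)) := by
        rw [Finset.map_add_left_Icc]
        congr 1 <;> ring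
      rw [hmap, Finset.sum_map]
      rfl
    rw [reidx, nsmul_eq_mul]
  -- key decrement inequality
  have key : ∀ k : ℤ, 0 ≤ k → V (k + 1) + z k ⬝ᵥ (Q *ᵥ z k) ≤ V k := by
    intro k hk
    set x := z k with hxdef
    set u := w k with hudef
    set y := z (k - (h : ℤ)) with hydef
    set t := Atp *ᵥ y with htdef
    set η : (Fin n ⊕ Fin n) → ℝ := Sum.elim x u with hηdef
    set ξ : ((Fin n ⊕ Fin n) ⊕ Fin n) → ℝ := Sum.elim η y with hξdef
    have sym1 : u ⬝ᵥ (P1 *ᵥ x) = x ⬝ᵥ (P1 *ᵥ u) := by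
      conv_lhs => rw [← hP1t]
      rw [dot_tr]
    have hzk1 : z (k + 1) = x + u := by
      rw [hxdef, hudef, hw k]
      abel
    have hd : (A1 - Atp - 1) *ᵥ x + -u = -t := by
      rw [htdef, hudef, hxdef, hydef, hAtp, hw k, hz k hk]
      simp only [Matrix.sub_mulVec, Matrix.add_mulVec, Matrix.neg_mulVec, Matrix.mulVec_sub,
        Matrix.one_mulVec]
      abel
    have hGη : G *ᵥ η = Sum.elim u (-t) := by
      rw [hG, hηdef, Matrix.fromBlocks_mulVec]
      simp only [Sum.elim_comp_inl, Sum.elim_comp_inr, Matrix.zero_mulVec, Matrix.one_mulVec,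
        Matrix.neg_mulVec, zero_add]
      rw [hd]
    have hPη : P *ᵥ η = Sum.elim (P1 *ᵥ x) (P2 *ᵥ x + P3 *ᵥ u) := by
      rw [hP, hηdef, Matrix.fromBlocks_mulVec]
      simp only [Sum.elim_comp_inl, Sum.elim_comp_inr, Matrix.zero_mulVec, add_zero]
    have hFy : Matrix.fromRows (0 : Matrix (Fin n) (Fin n) ℝ) Atp *ᵥ y = Sum.elim (0 : Fin n → ℝ) t := by
      rw [Matrix.fromRows_mulVec, htdef, Matrix.zero_mulVec]
    have hMv : ∀ v : Fin n → ℝ, η ⬝ᵥ (M *ᵥ v) = x ⬝ᵥ (M1 *ᵥ v) + u ⬝ᵥ (M2 *ᵥ v) := by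
      intro v
      rw [hM, Matrix.fromRows_mulVec, hηdef, sumElim_dotProduct_sumElim]
    -- quadratic form pieces
    have p2 : η ⬝ᵥ (Matrix.fromBlocks M1 0 M2 0 *ᵥ η)
        = x ⬝ᵥ (M1 *ᵥ x) + u ⬝ᵥ (M2 *ᵥ x) := by
      rw [hηdef, quad_block]
      simp
    have p3 : η ⬝ᵥ ((Matrix.fromBlocks M1 0 M2 0)ᵀ *ᵥ η)
        = x ⬝ᵥ (M1 *ᵥ x) + u ⬝ᵥ (M2 *ᵥ x) := by
      rw [dot_tr, p2]
    have p1 : η ⬝ᵥ (Matrix.fromBlocks S2 0 0 (P1 + (h : ℝ) • S1) *ᵥ η)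
        = x ⬝ᵥ (S2 *ᵥ x) + u ⬝ᵥ (P1 *ᵥ u) + (h : ℝ) * (u ⬝ᵥ (S1 *ᵥ u)) := by
      rw [hηdef, quad_block]
      simp only [Matrix.zero_mulVec, dotProduct_zero, add_zero, Matrix.add_mulVec,
        Matrix.smul_mulVec, dotProduct_add, dotProduct_smul, smul_eq_mul]
      ring
    have p4 : η ⬝ᵥ ((Pᵀ * G) *ᵥ η)
        = u ⬝ᵥ (P1 *ᵥ x) - t ⬝ᵥ (P2 *ᵥ x) - t ⬝ᵥ (P3 *ᵥ u) := by
      rw [← Matrix.mulVec_mulVec, dot_tr, hGη, hPη, sumElim_dotProduct_sumElim,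
        neg_dotProduct, dotProduct_add]
      ring
    have p5 : η ⬝ᵥ ((Gᵀ * P) *ᵥ η)
        = u ⬝ᵥ (P1 *ᵥ x) - t ⬝ᵥ (P2 *ᵥ x) - t ⬝ᵥ (P3 *ᵥ u) := by
      rw [← Matrix.mulVec_mulVec, dot_tr, hPη, hGη, sumElim_dotProduct_sumElim,
        dotProduct_neg, add_dotProduct, dotProduct_comm (P1 *ᵥ x) u,
        dotProduct_comm (P2 *ᵥ x) t, dotProduct_comm (P3 *ᵥ u) t]
      ring
    have eΨ : η ⬝ᵥ (Ψ *ᵥ η)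
        = (h : ℝ) * (η ⬝ᵥ (W *ᵥ η)) + x ⬝ᵥ (S2 *ᵥ x) + u ⬝ᵥ (P1 *ᵥ u)
          + (h : ℝ) * (u ⬝ᵥ (S1 *ᵥ u)) + 2 * (x ⬝ᵥ (M1 *ᵥ x)) + 2 * (u ⬝ᵥ (M2 *ᵥ x))
          + 2 * (x ⬝ᵥ (P1 *ᵥ u)) - 2 * (t ⬝ᵥ (P2 *ᵥ x)) - 2 * (t ⬝ᵥ (P3 *ᵥ u)) := by
      rw [hΨ]
      simp only [Matrix.add_mulVec, dotProduct_add, Matrix.smul_mulVec, dotProduct_smul,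
        smul_eq_mul]
      rw [p1, p2, p3, p4, p5, sym1]
      ring
    have eB : η ⬝ᵥ ((Pᵀ * Matrix.fromRows 0 Atp - M) *ᵥ y)
        = t ⬝ᵥ (P2 *ᵥ x) + t ⬝ᵥ (P3 *ᵥ u) - x ⬝ᵥ (M1 *ᵥ y) - u ⬝ᵥ (M2 *ᵥ y) := by
      rw [Matrix.sub_mulVec, dotProduct_sub, show (Pᵀ * Matrix.fromRows 0 Atp) *ᵥ y = Pᵀ *ᵥ (Matrix.fromRows 0 Atp *ᵥ y) from (Matrix.mulVec_mulVec _ _ _).symm, dot_tr, hFy, hPη,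
        sumElim_dotProduct_sumElim, zero_dotProduct, dotProduct_add, hMv]
      ring
    have eBt : y ⬝ᵥ ((Pᵀ * Matrix.fromRows 0 Atp - M)ᵀ *ᵥ η)
        = t ⬝ᵥ (P2 *ᵥ x) + t ⬝ᵥ (P3 *ᵥ u) - x ⬝ᵥ (M1 *ᵥ y) - u ⬝ᵥ (M2 *ᵥ y) := by
      rw [dot_tr, eB]
    have eS2 : y ⬝ᵥ ((-S2) *ᵥ y) = -(y ⬝ᵥ (S2 *ᵥ y)) := by
      rw [Matrix.neg_mulVec, dotProduct_neg]
    have top1 : Sum.elim η y ⬝ᵥ (Matrix.fromBlocks Ψ (Pᵀ * Matrix.fromRows 0 Atp - M)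
          (Pᵀ * Matrix.fromRows 0 Atp - M)ᵀ (-S2) *ᵥ Sum.elim η y)
        = (h : ℝ) * (η ⬝ᵥ (W *ᵥ η)) + x ⬝ᵥ (S2 *ᵥ x) + u ⬝ᵥ (P1 *ᵥ u)
          + (h : ℝ) * (u ⬝ᵥ (S1 *ᵥ u)) + 2 * (x ⬝ᵥ (M1 *ᵥ x)) + 2 * (u ⬝ᵥ (M2 *ᵥ x))
          + 2 * (x ⬝ᵥ (P1 *ᵥ u)) - 2 * (x ⬝ᵥ (M1 *ᵥ y)) - 2 * (u ⬝ᵥ (M2 *ᵥ y))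
          - y ⬝ᵥ (S2 *ᵥ y) := by
      rw [quad_block, eΨ, eB, eBt, eS2]
      ring
    have top2 : Sum.elim η y ⬝ᵥ (Matrix.fromBlocks (Matrix.fromBlocks Q 0 0 0) 0 0 0 *ᵥ
          Sum.elim η y) = x ⬝ᵥ (Q *ᵥ x) := by
      rw [quad_block, hηdef, quad_block]
      simp
    have hΛξ : ξ ⬝ᵥ ((Λ + Qbar) *ᵥ ξ)
        = (h : ℝ) * (η ⬝ᵥ (W *ᵥ η)) + x ⬝ᵥ (S2 *ᵥ x) + u ⬝ᵥ (P1 *ᵥ u)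
          + (h : ℝ) * (u ⬝ᵥ (S1 *ᵥ u)) + 2 * (x ⬝ᵥ (M1 *ᵥ x)) + 2 * (u ⬝ᵥ (M2 *ᵥ x))
          + 2 * (x ⬝ᵥ (P1 *ᵥ u)) - 2 * (x ⬝ᵥ (M1 *ᵥ y)) - 2 * (u ⬝ᵥ (M2 *ᵥ y))
          - y ⬝ᵥ (S2 *ᵥ y) + x ⬝ᵥ (Q *ᵥ x) := by
      rw [Matrix.add_mulVec, dotProduct_add, hΛ, hQbar, hξdef, top1, top2]
    have hneg : ξ ⬝ᵥ ((Λ + Qbar) *ᵥ ξ) ≤ 0 := by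
      have h0 := hΛQ.dotProduct_mulVec_nonneg ξ
      simp only [star_trivial, Matrix.neg_mulVec, dotProduct_neg] at h0
      linarith
    have hWMS : ∀ v : Fin n → ℝ,
        0 ≤ η ⬝ᵥ (W *ᵥ η) + 2 * (x ⬝ᵥ (M1 *ᵥ v) + u ⬝ᵥ (M2 *ᵥ v)) + v ⬝ᵥ (S1 *ᵥ v) := by
      intro v
      have h0 := hLMI.dotProduct_mulVec_nonneg (Sum.elim η v)
      simp only [star_trivial] at h0
      rw [quad_block, dot_tr, hMv v] at h0
      linarith
    have hcard2 : (Finset.Icc (k - (h : ℤ)) (k - 1)).card = h := by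
      rw [Int.card_Icc]; omega
    have e1 : ∑ l ∈ Finset.Icc (k - (h : ℤ)) (k - 1), x ⬝ᵥ (M1 *ᵥ w l)
        = x ⬝ᵥ (M1 *ᵥ x) - x ⬝ᵥ (M1 *ᵥ y) := by
      rw [← dot_mulVec_sum, tele h k, ← hxdef, ← hydef, Matrix.mulVec_sub, dotProduct_sub]
    have e2 : ∑ l ∈ Finset.Icc (k - (h : ℤ)) (k - 1), u ⬝ᵥ (M2 *ᵥ w l)
        = u ⬝ᵥ (M2 *ᵥ x) - u ⬝ᵥ (M2 *ᵥ y) := by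
      rw [← dot_mulVec_sum, tele h k, ← hxdef, ← hydef, Matrix.mulVec_sub, dotProduct_sub]
    have hsum : 0 ≤ (h : ℝ) * (η ⬝ᵥ (W *ᵥ η))
        + 2 * (x ⬝ᵥ (M1 *ᵥ x) + u ⬝ᵥ (M2 *ᵥ x) - x ⬝ᵥ (M1 *ᵥ y) - u ⬝ᵥ (M2 *ᵥ y))
        + ∑ l ∈ Finset.Icc (k - (h : ℤ)) (k - 1), w l ⬝ᵥ (S1 *ᵥ w l) := by
      have hb : (0:ℝ) ≤ ∑ l ∈ Finset.Icc (k - (h : ℤ)) (k - 1),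
          (η ⬝ᵥ (W *ᵥ η) + 2 * (x ⬝ᵥ (M1 *ᵥ w l) + u ⬝ᵥ (M2 *ᵥ w l))
            + w l ⬝ᵥ (S1 *ᵥ w l)) :=
        Finset.sum_nonneg fun l _ => hWMS (w l)
      have hexp : ∑ l ∈ Finset.Icc (k - (h : ℤ)) (k - 1),
          (η ⬝ᵥ (W *ᵥ η) + 2 * (x ⬝ᵥ (M1 *ᵥ w l) + u ⬝ᵥ (M2 *ᵥ w l))
            + w l ⬝ᵥ (S1 *ᵥ w l))
          = (h : ℝ) * (η ⬝ᵥ (W *ᵥ η))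
            + 2 * (x ⬝ᵥ (M1 *ᵥ x) + u ⬝ᵥ (M2 *ᵥ x) - x ⬝ᵥ (M1 *ᵥ y) - u ⬝ᵥ (M2 *ᵥ y))
            + ∑ l ∈ Finset.Icc (k - (h : ℤ)) (k - 1), w l ⬝ᵥ (S1 *ᵥ w l) := by
        rw [Finset.sum_add_distrib, Finset.sum_add_distrib, Finset.sum_const, hcard2,
          nsmul_eq_mul, ← Finset.mul_sum, Finset.sum_add_distrib, e1, e2]
        ring
      linarith [hexp ▸ hb]
    -- expand V (k+1) and V k
    have hidx : k + 1 - 1 = k := by ring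
    have hVk1 : V (k + 1) = x ⬝ᵥ (P1 *ᵥ x) + 2 * (x ⬝ᵥ (P1 *ᵥ u)) + u ⬝ᵥ (P1 *ᵥ u)
        + ∑ θ ∈ Finset.Icc (-(h : ℤ) + 1) 0,
            ∑ l ∈ Finset.Icc (k + θ) k, w l ⬝ᵥ (S1 *ᵥ w l)
        + ∑ l ∈ Finset.Icc (k + 1 - (h : ℤ)) k, z l ⬝ᵥ (S2 *ᵥ z l) := by
      rw [hV (k + 1), hidx, hzk1]
      have eP1 : (x + u) ⬝ᵥ (P1 *ᵥ (x + u))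
          = x ⬝ᵥ (P1 *ᵥ x) + 2 * (x ⬝ᵥ (P1 *ᵥ u)) + u ⬝ᵥ (P1 *ᵥ u) := by
        rw [Matrix.mulVec_add, dotProduct_add, add_dotProduct, add_dotProduct, sym1]
        ring
      rw [eP1]
    have hVk : V k = x ⬝ᵥ (P1 *ᵥ x)
        + ∑ θ ∈ Finset.Icc (-(h : ℤ) + 1) 0,
            ∑ l ∈ Finset.Icc (k - 1 + θ) (k - 1), w l ⬝ᵥ (S1 *ᵥ w l)
        + ∑ l ∈ Finset.Icc (k - (h : ℤ)) (k - 1), z l ⬝ᵥ (S2 *ᵥ z l) := hV k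
    have hS2diff : ∑ l ∈ Finset.Icc (k + 1 - (h : ℤ)) k, z l ⬝ᵥ (S2 *ᵥ z l)
        - ∑ l ∈ Finset.Icc (k - (h : ℤ)) (k - 1), z l ⬝ᵥ (S2 *ᵥ z l)
        = x ⬝ᵥ (S2 *ᵥ x) - y ⬝ᵥ (S2 *ᵥ y) := by
      have h1 : Finset.Icc (k + 1 - (h : ℤ)) k
          = insert k (Finset.Icc (k + 1 - (h : ℤ)) (k - 1)) := by
        ext l
        simp only [Finset.mem_Icc, Finset.mem_insert]
        omega
      have h2 : Finset.Icc (k - (h : ℤ)) (k - 1)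
          = insert (k - (h : ℤ)) (Finset.Icc (k + 1 - (h : ℤ)) (k - 1)) := by
        ext l
        simp only [Finset.mem_Icc, Finset.mem_insert]
        omega
      have n1 : k ∉ Finset.Icc (k + 1 - (h : ℤ)) (k - 1) := by
        simp only [Finset.mem_Icc]; omega
      have n2 : k - (h : ℤ) ∉ Finset.Icc (k + 1 - (h : ℤ)) (k - 1) := by
        simp only [Finset.mem_Icc]; omega
      rw [h1, h2, Finset.sum_insert n1, Finset.sum_insert n2, ← hxdef, ← hydef]
      ring
    have sdk := sdiff k
    rw [← hudef] at sdk
    linarith [hVk1, hVk, hS2diff, sdk, hΛξ, hneg, hsum]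
  -- partial sums are bounded by V 0
  have hpartial : ∀ N : ℕ,
      V (N : ℤ) + ∑ i ∈ Finset.range N, z (i : ℤ) ⬝ᵥ (Q *ᵥ z (i : ℤ)) ≤ V 0 := by
    intro N
    induction N with
    | zero => simp
    | succ N ih =>
      have hk := key (N : ℤ) (Int.natCast_nonneg N)
      rw [Finset.sum_range_succ,
        show (((N + 1 : ℕ)) : ℤ) = (N : ℤ) + 1 by push_cast; ring]
      linarith
  have hbound : ∀ N : ℕ, ∑ i ∈ Finset.range N, z (i : ℤ) ⬝ᵥ (Q *ᵥ z (i : ℤ))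
      ≤ z 0 ⬝ᵥ ((P1 + (h : ℝ) • S2) *ᵥ z 0) := by
    intro N
    have h1 := hpartial N
    have h2 := hVpos (N : ℤ)
    rw [hV0] at h1
    linarith
  refine ⟨summable_of_sum_range_le (fun i => hQpos _) hbound,
    Real.tsum_le_of_sum_range_le (fun i => hQpos _) hbound⟩
end
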